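/- arXiv:2403.06691 — 6 statements merged into one kernel-verified Lean document; each statement's English description precedes it below -/
import Mathlib

section
/- Let G be a simple graph, let v be a vertex of degree 1 with unique neighbor u, and suppose u has another neighbor w ≠ v of degree 1 and u has degree at least 3. Let G' = G − v. Then the maximum number of colors of a feasible edge 2-coloring of G' equals the maximum number of colors of a feasible edge 2-coloring of G. -/
/-- The set of colors seen by a vertex `v`: colors of edges incident to `v`. -/
def seenColors {V : Type*} [Fintype V] [DecidableEq V] (G : SimpleGraph V)
    [DecidableRel G.Adj] (χ : Sym2 V → ℕ) (v : V) : Finset ℕ :=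
  (G.neighborFinset v).image (fun u => χ s(v, u))

/-- A feasible edge 2-coloring: every vertex sees at most 2 distinct colors. -/
def IsFeasible {V : Type*} [Fintype V] [DecidableEq V] (G : SimpleGraph V)
    [DecidableRel G.Adj] (χ : Sym2 V → ℕ) : Prop :=
  ∀ v : V, (seenColors G χ v).card ≤ 2
/-- The number of distinct colors used by an edge coloring. -/
def numColors {V : Type*} [Fintype V] [DecidableEq V] (G : SimpleGraph V)
    [DecidableRel G.Adj] (χ : Sym2 V → ℕ) : ℕ :=
  (G.edgeFinset.image χ).card

/-- The maximum number of colors of a feasible edge 2-coloring of `G`. -/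
noncomputable def optColors {V : Type*} [Fintype V] [DecidableEq V]
    (G : SimpleGraph V) [DecidableRel G.Adj] : ℕ :=
  sSup {k : ℕ | ∃ χ : Sym2 V → ℕ, IsFeasible G χ ∧ numColors G χ = k}


theorem stmt6 {V : Type*} [Fintype V] [DecidableEq V] (G : SimpleGraph V)
    [DecidableRel G.Adj] (u v w : V)
    (hv : G.degree v = 1) (huv : G.Adj u v)
    (hw : G.degree w = 1) (huw : G.Adj u w) (hvw : v ≠ w)
    (hu : 3 ≤ G.degree u)
    (G' : SimpleGraph V) [DecidableRel G'.Adj]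
    (hG' : ∀ a b : V, G'.Adj a b ↔ G.Adj a b ∧ a ≠ v ∧ b ≠ v) :
    optColors G' = optColors G := by
  classical
  have huv' : u ≠ v := G.ne_of_adj huv
  have huw' : u ≠ w := G.ne_of_adj huw
  -- neighborhood of v is {u}
  have hNv : G.neighborFinset v = {u} := by
    have hv' : (G.neighborFinset v).card = 1 := by
      rw [SimpleGraph.card_neighborFinset_eq_degree]; exact hv
    obtain ⟨a, ha⟩ := Finset.card_eq_one.mp hv'
    have hu' : u ∈ G.neighborFinset v := by
      simpa [SimpleGraph.mem_neighborFinset] using huv.symm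
    rw [ha] at hu' ⊢
    simp_all
  have hNw : G.neighborFinset w = {u} := by
    have hw' : (G.neighborFinset w).card = 1 := by
      rw [SimpleGraph.card_neighborFinset_eq_degree]; exact hw
    obtain ⟨a, ha⟩ := Finset.card_eq_one.mp hw'
    have hu' : u ∈ G.neighborFinset w := by
      simpa [SimpleGraph.mem_neighborFinset] using huw.symm
    rw [ha] at hu' ⊢
    simp_all
  have hAdjv : ∀ z, G.Adj z v → z = u := by
    intro z hz
    have : z ∈ G.neighborFinset v := by
      simpa [SimpleGraph.mem_neighborFinset] using hz.symm
    simpa [hNv] using this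
  -- neighborhoods in G'
  have hN'mem : ∀ z x : V, x ∈ G'.neighborFinset z ↔ (G.Adj z x ∧ z ≠ v ∧ x ≠ v) := by
    intro z x; rw [SimpleGraph.mem_neighborFinset, hG']
  have hN'u : G'.neighborFinset u = (G.neighborFinset u).erase v := by
    ext x
    simp only [hN'mem, Finset.mem_erase, SimpleGraph.mem_neighborFinset]
    exact ⟨fun h => ⟨h.2.2, h.1⟩, fun h => ⟨h.2, huv', h.1⟩⟩
  have hN'z : ∀ z, z ≠ u → z ≠ v → G'.neighborFinset z = G.neighborFinset z := by
    intro z hzu hzv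
    ext x
    simp only [hN'mem, SimpleGraph.mem_neighborFinset]
    refine ⟨fun h => h.1, fun h => ⟨h, hzv, fun hxv => hzu (hAdjv z (hxv ▸ h))⟩⟩
  have hN'v : G'.neighborFinset v = ∅ := by
    ext x; simp [hN'mem]
  have hN'w : G'.neighborFinset w = {u} := by
    rw [hN'z w (Ne.symm huw') (Ne.symm hvw), hNw]
  -- edge finsets
  have hsuv : s(u,v) ∈ G.edgeFinset := by
    simpa [SimpleGraph.mem_edgeFinset] using huv
  have hE' : G'.edgeFinset = G.edgeFinset.erase s(u,v) := by
    ext e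
    induction e using Sym2.ind with
    | _ a b =>
      simp only [SimpleGraph.mem_edgeFinset, SimpleGraph.mem_edgeSet, Finset.mem_erase, hG']
      constructor
      · rintro ⟨hab, hav, hbv⟩
        refine ⟨fun h => ?_, hab⟩
        rcases Sym2.eq_iff.mp h with ⟨h1,h2⟩|⟨h1,h2⟩
        · exact hbv h2
        · exact hav h1
      · rintro ⟨hne, hab⟩
        refine ⟨hab, fun hav => ?_, fun hbv => ?_⟩
        · subst hav
          have hbu : b = u := hAdjv b hab.symm
          subst hbu
          exact hne (Sym2.eq_swap)
        · subst hbv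
          have hau : a = u := hAdjv a hab
          subst hau
          exact hne rfl
  have hEins : G.edgeFinset = insert s(u,v) G'.edgeFinset := by
    rw [hE', Finset.insert_erase hsuv]
  have hsuwne : s(u,w) ≠ s(u,v) := by
    intro h
    rcases Sym2.eq_iff.mp h with ⟨_,h2⟩|⟨h1,_⟩
    · exact hvw h2.symm
    · exact huv' h1
  have hsuw' : s(u,w) ∈ G'.edgeFinset := by
    rw [hE']
    exact Finset.mem_erase.mpr ⟨hsuwne, by simpa [SimpleGraph.mem_edgeFinset] using huw⟩
  -- a third neighbor of u
  obtain ⟨x, hux, hxv, hxw⟩ : ∃ x, G.Adj u x ∧ x ≠ v ∧ x ≠ w := by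
    by_contra h
    push_neg at h
    have hsub : G.neighborFinset u ⊆ {v, w} := by
      intro z hz
      rw [SimpleGraph.mem_neighborFinset] at hz
      rcases eq_or_ne z v with rfl|hzv
      · simp
      · simp [h z hz hzv]
    have h2 : ({v,w} : Finset V).card ≤ 2 :=
      (Finset.card_insert_le _ _).trans (by simp)
    have hd : G.degree u ≤ 2 := by
      rw [← SimpleGraph.card_neighborFinset_eq_degree]
      exact (Finset.card_le_card hsub).trans h2
    omega
  have hsuxne_v : s(u,x) ≠ s(u,v) := by
    intro h
    rcases Sym2.eq_iff.mp h with ⟨_,h2⟩|⟨h1,_⟩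
    · exact hxv h2
    · exact huv' h1
  have hsuxne_w : s(u,x) ≠ s(u,w) := by
    intro h
    rcases Sym2.eq_iff.mp h with ⟨_,h2⟩|⟨h1,_⟩
    · exact hxw h2
    · exact huw' h1
  -- sup plumbing
  have hbdd : ∀ (H : SimpleGraph V) [DecidableRel H.Adj],
      BddAbove {k : ℕ | ∃ χ : Sym2 V → ℕ, IsFeasible H χ ∧ numColors H χ = k} := by
    intro H _
    refine ⟨H.edgeFinset.card, ?_⟩
    rintro k ⟨χ, _, rfl⟩
    exact Finset.card_image_le
  have hnon : ∀ (H : SimpleGraph V) [DecidableRel H.Adj],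
      Set.Nonempty {k : ℕ | ∃ χ : Sym2 V → ℕ, IsFeasible H χ ∧ numColors H χ = k} := by
    intro H _
    refine ⟨numColors H (fun _ => 0), fun _ => 0, fun z => ?_, rfl⟩
    have hsub : seenColors H (fun _ => 0) z ⊆ {0} := by
      intro c hc
      simp only [seenColors, Finset.mem_image] at hc
      obtain ⟨y, _, hyc⟩ := hc
      simp [← hyc]
    exact (Finset.card_le_card hsub).trans (by simp)
  simp only [optColors]
  apply le_antisymm
  · -- optColors G' ≤ optColors G : extend a coloring of G' to G
    apply csSup_le (hnon G')
    rintro k ⟨χ, hfeas, rfl⟩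
    apply le_csSup (hbdd G)
    set χ₂ : Sym2 V → ℕ := fun e => if e = s(u,v) then χ s(u,w) else χ e with hχ₂
    refine ⟨χ₂, ?_, ?_⟩
    · intro z
      by_cases hzv : z = v
      · have heq : seenColors G χ₂ z = {χ₂ s(v,u)} := by
          rw [hzv]; simp [seenColors, hNv]
        rw [heq]; simp
      · by_cases hzu : z = u
        · rw [hzu]
          have hsub : seenColors G χ₂ u ⊆ seenColors G' χ u := by
            intro c hc
            simp only [seenColors, Finset.mem_image] at hc ⊢
            obtain ⟨y, hy, hyc⟩ := hc
            by_cases hyv : y = v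
            · rw [hyv] at hyc
              refine ⟨w, ?_, ?_⟩
              · rw [hN'u]
                exact Finset.mem_erase.mpr ⟨Ne.symm hvw,
                  (SimpleGraph.mem_neighborFinset _ _ _).mpr huw⟩
              · rw [← hyc]; simp only [hχ₂]; simp
            · refine ⟨y, ?_, ?_⟩
              · rw [hN'u]; exact Finset.mem_erase.mpr ⟨hyv, hy⟩
              · rw [← hyc]
                have hne : s(u,y) ≠ s(u,v) := by
                  intro h
                  rcases Sym2.eq_iff.mp h with ⟨_,h2⟩|⟨h1,_⟩
                  · exact hyv h2
                  · exact huv' h1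
                simp only [hχ₂]; rw [if_neg hne]
          exact (Finset.card_le_card hsub).trans (hfeas u)
        · have hne2 : ∀ y : V, s(z,y) ≠ s(u,v) := by
            intro y h
            rcases Sym2.eq_iff.mp h with ⟨h1,_⟩|⟨h1,_⟩
            · exact hzu h1
            · exact hzv h1
          have heq : seenColors G χ₂ z = seenColors G' χ z := by
            simp only [seenColors, hN'z z hzu hzv]
            apply Finset.image_congr
            intro y _
            simp only [hχ₂]; rw [if_neg (hne2 y)]
          rw [heq]; exact hfeas z
    · simp only [numColors]
      have himg : G.edgeFinset.image χ₂ = G'.edgeFinset.image χ := by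
        rw [hEins, Finset.image_insert]
        have h1 : G'.edgeFinset.image χ₂ = G'.edgeFinset.image χ := by
          apply Finset.image_congr
          intro e he
          replace he := Finset.mem_coe.mp he
          rw [hE'] at he
          simp only [hχ₂]; rw [if_neg (Finset.mem_erase.mp he).1]
        rw [h1]
        have h2 : χ₂ s(u,v) = χ s(u,w) := by
          simp only [hχ₂]; simp
        rw [h2]
        exact Finset.insert_eq_self.mpr (Finset.mem_image_of_mem χ hsuw')
      rw [himg]
  · -- optColors G ≤ optColors G' : restrict a coloring of G to G'
    apply csSup_le (hnon G)
    rintro k ⟨χ, hfeas, rfl⟩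
    apply le_csSup (hbdd G')
    by_cases hcase : χ s(u,v) ∈ seenColors G' χ u
    · refine ⟨χ, ?_, ?_⟩
      · intro z
        refine (Finset.card_le_card ?_).trans (hfeas z)
        intro c hc
        simp only [seenColors, Finset.mem_image] at hc ⊢
        obtain ⟨y, hy, hyc⟩ := hc
        rw [hN'mem] at hy
        exact ⟨y, (SimpleGraph.mem_neighborFinset _ _ _).mpr hy.1, hyc⟩
      · simp only [numColors]
        have himg : G.edgeFinset.image χ = G'.edgeFinset.image χ := by
          rw [hEins, Finset.image_insert]
          apply Finset.insert_eq_self.mpr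
          simp only [seenColors, Finset.mem_image] at hcase
          obtain ⟨y, hy, hyc⟩ := hcase
          have hadj : G'.Adj u y := (SimpleGraph.mem_neighborFinset _ _ _).mp hy
          have hmem : s(u,y) ∈ G'.edgeFinset := by
            simpa [SimpleGraph.mem_edgeFinset] using hadj
          exact hyc ▸ Finset.mem_image_of_mem χ hmem
        rw [himg]
    · -- recolor the edge uw with the color of uv
      have hwmem : w ∈ (G.neighborFinset u).erase v :=
        Finset.mem_erase.mpr ⟨Ne.symm hvw, (SimpleGraph.mem_neighborFinset _ _ _).mpr huw⟩
      have hxmem : x ∈ (G.neighborFinset u).erase v :=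
        Finset.mem_erase.mpr ⟨hxv, (SimpleGraph.mem_neighborFinset _ _ _).mpr hux⟩
      have hcw : χ s(u,w) ≠ χ s(u,v) := by
        intro h
        apply hcase
        simp only [seenColors, hN'u]
        exact Finset.mem_image.mpr ⟨w, hwmem, h⟩
      have hcx : χ s(u,x) ≠ χ s(u,v) := by
        intro h
        apply hcase
        simp only [seenColors, hN'u]
        exact Finset.mem_image.mpr ⟨x, hxmem, h⟩
      have hwx : χ s(u,w) = χ s(u,x) := by
        by_contra hne'
        have hsub : ({χ s(u,v), χ s(u,w), χ s(u,x)} : Finset ℕ) ⊆ seenColors G χ u := by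
          intro c hc
          simp only [Finset.mem_insert, Finset.mem_singleton] at hc
          simp only [seenColors, Finset.mem_image]
          rcases hc with rfl|rfl|rfl
          · exact ⟨v, (SimpleGraph.mem_neighborFinset _ _ _).mpr huv, rfl⟩
          · exact ⟨w, (SimpleGraph.mem_neighborFinset _ _ _).mpr huw, rfl⟩
          · exact ⟨x, (SimpleGraph.mem_neighborFinset _ _ _).mpr hux, rfl⟩
        have h3 : ({χ s(u,v), χ s(u,w), χ s(u,x)} : Finset ℕ).card = 3 := by
          rw [Finset.card_insert_of_notMem (by simp [Ne.symm hcw, Ne.symm hcx]),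
            Finset.card_insert_of_notMem (by simp [hne']), Finset.card_singleton]
        have hle := Finset.card_le_card hsub
        have hf := hfeas u
        omega
      set χ' : Sym2 V → ℕ := fun e => if e = s(u,w) then χ s(u,v) else χ e with hχ'
      refine ⟨χ', ?_, ?_⟩
      · intro z
        by_cases hzv : z = v
        · rw [hzv]; simp [seenColors, hN'v]
        · by_cases hzu : z = u
          · rw [hzu]
            have hsub : seenColors G' χ' u ⊆ seenColors G χ u := by
              intro c hc
              simp only [seenColors, hN'u, Finset.mem_image] at hc ⊢
              obtain ⟨y, hy, hyc⟩ := hc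
              have hy' := Finset.mem_of_mem_erase hy
              by_cases hyw : y = w
              · rw [hyw] at hyc
                refine ⟨v, (SimpleGraph.mem_neighborFinset _ _ _).mpr huv, ?_⟩
                rw [← hyc]; simp only [hχ']; simp
              · refine ⟨y, hy', ?_⟩
                rw [← hyc]
                have hne : s(u,y) ≠ s(u,w) := by
                  intro h
                  rcases Sym2.eq_iff.mp h with ⟨_,h2⟩|⟨h1,_⟩
                  · exact hyw h2
                  · exact huw' h1
                simp only [hχ']; rw [if_neg hne]
            exact (Finset.card_le_card hsub).trans (hfeas u)
          · by_cases hzw : z = w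
            · have heq : seenColors G' χ' z = {χ' s(w,u)} := by
                rw [hzw]; simp [seenColors, hN'w]
              rw [heq]; simp
            · have hne2 : ∀ y : V, s(z,y) ≠ s(u,w) := by
                intro y h
                rcases Sym2.eq_iff.mp h with ⟨h1,_⟩|⟨h1,_⟩
                · exact hzu h1
                · exact hzw h1
              have heq : seenColors G' χ' z = seenColors G χ z := by
                simp only [seenColors, hN'z z hzu hzv]
                apply Finset.image_congr
                intro y _
                simp only [hχ']; rw [if_neg (hne2 y)]
              rw [heq]; exact hfeas z
      · simp only [numColors]
        have himg : G'.edgeFinset.image χ' = G.edgeFinset.image χ := by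
          apply Finset.Subset.antisymm
          · intro c hc
            obtain ⟨e, he, hec⟩ := Finset.mem_image.mp hc
            by_cases hew : e = s(u,w)
            · subst hew
              rw [← hec]
              have : χ' s(u,w) = χ s(u,v) := by
                simp only [hχ']; simp
              rw [this]
              exact Finset.mem_image_of_mem χ hsuv
            · rw [← hec]
              have : χ' e = χ e := by simp only [hχ']; rw [if_neg hew]
              rw [this]
              refine Finset.mem_image_of_mem χ ?_
              rw [hE'] at he
              exact Finset.mem_of_mem_erase he
          · intro c hc
            obtain ⟨e, he, hec⟩ := Finset.mem_image.mp hc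
            by_cases heuv : e = s(u,v)
            · subst heuv
              refine Finset.mem_image.mpr ⟨s(u,w), hsuw', ?_⟩
              rw [← hec]; simp only [hχ']; simp
            · by_cases heuw : e = s(u,w)
              · subst heuw
                refine Finset.mem_image.mpr ⟨s(u,x), ?_, ?_⟩
                · rw [hE']
                  exact Finset.mem_erase.mpr ⟨hsuxne_v,
                    by simpa [SimpleGraph.mem_edgeFinset] using hux⟩
                · rw [← hec]
                  have : χ' s(u,x) = χ s(u,x) := by
                    simp only [hχ']; rw [if_neg hsuxne_w]
                  rw [this, ← hwx]
              · refine Finset.mem_image.mpr ⟨e, ?_, ?_⟩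
                · rw [hE']; exact Finset.mem_erase.mpr ⟨heuv, he⟩
                · rw [← hec]; simp only [hχ']; rw [if_neg heuw]
        rw [himg]
end

section
/- Let G be a simple graph with a vertex v of degree 2 adjacent to vertices u₁ and u₂. Let G' be the graph obtained from G by deleting v and adding two new vertices v₁, v₂ with edges u₁v₁ and u₂v₂. Then the maximum number of colors of a feasible edge 2-coloring of G' equals that of G. -/
/-- Vertex map collapsing the two new pendant vertices back to `v`. -/
def gmap {V : Type*} (v : V) : V ⊕ Fin 2 → V := Sum.elim id fun _ => v

/-- Edge map from `G` to `G'`. -/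
def Fmap {V : Type*} [DecidableEq V] (v u₁ u₂ : V) (e : Sym2 V) : Sym2 (V ⊕ Fin 2) :=
  if e = s(v, u₁) then s(Sum.inl u₁, Sum.inr 0)
  else if e = s(v, u₂) then s(Sum.inl u₂, Sum.inr 1)
  else e.map Sum.inl

theorem stmt7 {V : Type*} [Fintype V] [DecidableEq V] (G : SimpleGraph V)
    [DecidableRel G.Adj] (v u₁ u₂ : V)
    (hdeg : G.degree v = 2) (h1 : G.Adj v u₁) (h2 : G.Adj v u₂) (h12 : u₁ ≠ u₂)
    (G' : SimpleGraph (V ⊕ Fin 2)) [DecidableRel G'.Adj]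
    (hVV : ∀ a b : V, G'.Adj (Sum.inl a) (Sum.inl b) ↔
      G.Adj a b ∧ a ≠ v ∧ b ≠ v)
    (hv₁ : ∀ a : V, G'.Adj (Sum.inl a) (Sum.inr 0) ↔ a = u₁)
    (hv₂ : ∀ a : V, G'.Adj (Sum.inl a) (Sum.inr 1) ↔ a = u₂)
    (hnew : ∀ i j : Fin 2, ¬ G'.Adj (Sum.inr i) (Sum.inr j)) :
    optColors G' = optColors G := by
  classical
  -- neighbors of v are exactly u₁, u₂
  have hnb : G.neighborFinset v = {u₁, u₂} := by
    symm
    apply Finset.eq_of_subset_of_card_le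
    · intro x hx
      simp only [Finset.mem_insert, Finset.mem_singleton] at hx
      rcases hx with rfl | rfl
      · exact (SimpleGraph.mem_neighborFinset G v x).mpr h1
      · exact (SimpleGraph.mem_neighborFinset G v x).mpr h2
    · rw [SimpleGraph.card_neighborFinset_eq_degree, hdeg, Finset.card_insert_of_notMem (by
        simpa using h12), Finset.card_singleton]
  have hadjv : ∀ b, G.Adj v b ↔ b = u₁ ∨ b = u₂ := by
    intro b
    rw [← SimpleGraph.mem_neighborFinset, hnb]
    simp
  have hvu₁ : v ≠ u₁ := h1.ne
  have hvu₂ : v ≠ u₂ := h2.ne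
  have hne12 : (s(v, u₁) : Sym2 V) ≠ s(v, u₂) := by
    intro h
    rcases Sym2.eq_iff.mp h with ⟨_, h'⟩ | ⟨h', _⟩
    · exact h12 h'
    · exact hvu₂ h'
  -- computation rules for Fmap
  have hF1 : Fmap v u₁ u₂ s(v, u₁) = s(Sum.inl u₁, Sum.inr 0) := by
    rw [Fmap, if_pos rfl]
  have hF1' : Fmap v u₁ u₂ s(u₁, v) = s(Sum.inl u₁, Sum.inr 0) := by
    rw [show (s(u₁, v) : Sym2 V) = s(v, u₁) from Sym2.eq_swap, hF1]
  have hF2 : Fmap v u₁ u₂ s(v, u₂) = s(Sum.inl u₂, Sum.inr 1) := by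
    rw [Fmap, if_neg (Ne.symm hne12), if_pos rfl]
  have hF2' : Fmap v u₁ u₂ s(u₂, v) = s(Sum.inl u₂, Sum.inr 1) := by
    rw [show (s(u₂, v) : Sym2 V) = s(v, u₂) from Sym2.eq_swap, hF2]
  have hFne : ∀ a b : V, a ≠ v → b ≠ v →
      Fmap v u₁ u₂ s(a, b) = s(Sum.inl a, Sum.inl b) := by
    intro a b ha hb
    rw [Fmap, if_neg, if_neg]
    · simp [Sym2.map_pair_eq]
    · intro h
      rcases Sym2.eq_iff.mp h with ⟨h', _⟩ | ⟨_, h'⟩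
      · exact ha h'
      · exact hb h'
    · intro h
      rcases Sym2.eq_iff.mp h with ⟨h', _⟩ | ⟨_, h'⟩
      · exact ha h'
      · exact hb h'
  -- edge-set correspondences
  have hEA : G'.edgeFinset.image (Sym2.map (gmap v)) = G.edgeFinset := by
    ext e
    simp only [Finset.mem_image, SimpleGraph.mem_edgeFinset]
    constructor
    · rintro ⟨e', he', rfl⟩
      induction e' using Sym2.ind with
      | _ x y =>
        rw [SimpleGraph.mem_edgeSet] at he'
        rw [Sym2.map_pair_eq, SimpleGraph.mem_edgeSet]
        match x, y with
        | Sum.inl a, Sum.inl b =>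
          exact ((hVV a b).mp he').1
        | Sum.inl a, Sum.inr i =>
          fin_cases i
          · have := (hv₁ a).mp he'; subst this
            simpa [gmap] using h1.symm
          · have := (hv₂ a).mp he'; subst this
            simpa [gmap] using h2.symm
        | Sum.inr i, Sum.inl a =>
          fin_cases i
          · have := (hv₁ a).mp he'.symm; subst this
            simpa [gmap] using h1
          · have := (hv₂ a).mp he'.symm; subst this
            simpa [gmap] using h2
        | Sum.inr i, Sum.inr j => exact absurd he' (hnew i j)
    · intro he
      induction e using Sym2.ind with
      | _ a b =>
        rw [SimpleGraph.mem_edgeSet] at he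
        by_cases hav : a = v
        · subst hav
          rcases (hadjv b).mp he with rfl | rfl
          · exact ⟨s(Sum.inl b, Sum.inr 0), by
              rw [SimpleGraph.mem_edgeSet]; exact (hv₁ b).mpr rfl, by
              simp [Sym2.map_pair_eq, gmap, Sym2.eq_swap]⟩
          · exact ⟨s(Sum.inl b, Sum.inr 1), by
              rw [SimpleGraph.mem_edgeSet]; exact (hv₂ b).mpr rfl, by
              simp [Sym2.map_pair_eq, gmap, Sym2.eq_swap]⟩
        · by_cases hbv : b = v
          · subst hbv
            rcases (hadjv a).mp he.symm with rfl | rfl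
            · exact ⟨s(Sum.inl a, Sum.inr 0), by
                rw [SimpleGraph.mem_edgeSet]; exact (hv₁ a).mpr rfl, by
                simp [Sym2.map_pair_eq, gmap]⟩
            · exact ⟨s(Sum.inl a, Sum.inr 1), by
                rw [SimpleGraph.mem_edgeSet]; exact (hv₂ a).mpr rfl, by
                simp [Sym2.map_pair_eq, gmap]⟩
          · exact ⟨s(Sum.inl a, Sum.inl b), by
              rw [SimpleGraph.mem_edgeSet]; exact (hVV a b).mpr ⟨he, hav, hbv⟩, by
              simp [Sym2.map_pair_eq, gmap]⟩
  have hFB : G.edgeFinset.image (Fmap v u₁ u₂) = G'.edgeFinset := by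
    ext e'
    simp only [Finset.mem_image, SimpleGraph.mem_edgeFinset]
    constructor
    · rintro ⟨e, he, rfl⟩
      induction e using Sym2.ind with
      | _ a b =>
        rw [SimpleGraph.mem_edgeSet] at he
        by_cases hav : a = v
        · subst hav
          rcases (hadjv b).mp he with rfl | rfl
          · rw [hF1, SimpleGraph.mem_edgeSet]
            exact (hv₁ _).mpr rfl
          · rw [hF2, SimpleGraph.mem_edgeSet]
            exact (hv₂ _).mpr rfl
        · by_cases hbv : b = v
          · subst hbv
            rcases (hadjv a).mp he.symm with rfl | rfl
            · rw [hF1', SimpleGraph.mem_edgeSet]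
              exact (hv₁ _).mpr rfl
            · rw [hF2', SimpleGraph.mem_edgeSet]
              exact (hv₂ _).mpr rfl
          · rw [hFne a b hav hbv, SimpleGraph.mem_edgeSet]
            exact (hVV a b).mpr ⟨he, hav, hbv⟩
    · intro he'
      induction e' using Sym2.ind with
      | _ x y =>
        rw [SimpleGraph.mem_edgeSet] at he'
        match x, y with
        | Sum.inl a, Sum.inl b =>
          obtain ⟨hab, hav, hbv⟩ := (hVV a b).mp he'
          exact ⟨s(a, b), (SimpleGraph.mem_edgeSet G).mpr hab, hFne a b hav hbv⟩
        | Sum.inl a, Sum.inr i =>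
          fin_cases i
          · obtain rfl := (hv₁ a).mp he'
            exact ⟨s(v, a), (SimpleGraph.mem_edgeSet G).mpr h1, hF1⟩
          · obtain rfl := (hv₂ a).mp he'
            exact ⟨s(v, a), (SimpleGraph.mem_edgeSet G).mpr h2, hF2⟩
        | Sum.inr i, Sum.inl a =>
          fin_cases i
          · obtain rfl := (hv₁ a).mp he'.symm
            exact ⟨s(v, a), (SimpleGraph.mem_edgeSet G).mpr h1, by rw [hF1, Sym2.eq_swap]; rfl⟩
          · obtain rfl := (hv₂ a).mp he'.symm
            exact ⟨s(v, a), (SimpleGraph.mem_edgeSet G).mpr h2, by rw [hF2, Sym2.eq_swap]; rfl⟩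
        | Sum.inr i, Sum.inr j => exact absurd he' (hnew i j)
  -- direction A: coloring of G gives coloring of G'
  have dirA : ∀ χ : Sym2 V → ℕ, IsFeasible G χ →
      IsFeasible G' (χ ∘ Sym2.map (gmap v)) ∧
      numColors G' (χ ∘ Sym2.map (gmap v)) = numColors G χ := by
    intro χ hχ
    constructor
    · intro w
      match w with
      | Sum.inl a =>
        refine le_trans (Finset.card_le_card ?_) (hχ a)
        intro x hx
        simp only [seenColors, Finset.mem_image, SimpleGraph.mem_neighborFinset] at hx ⊢
        obtain ⟨u, hu, rfl⟩ := hx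
        match u with
        | Sum.inl b =>
          obtain ⟨hab, _, _⟩ := (hVV a b).mp hu
          exact ⟨b, hab, by simp [gmap, Sym2.map_pair_eq]⟩
        | Sum.inr i =>
          fin_cases i
          · obtain rfl := (hv₁ a).mp hu
            exact ⟨v, h1.symm, by simp [gmap, Sym2.map_pair_eq]⟩
          · obtain rfl := (hv₂ a).mp hu
            exact ⟨v, h2.symm, by simp [gmap, Sym2.map_pair_eq]⟩
      | Sum.inr i =>
        refine le_trans Finset.card_image_le (le_trans (Finset.card_le_card
          (show G'.neighborFinset (Sum.inr i) ⊆ {Sum.inl u₁, Sum.inl u₂} from ?_)) ?_)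
        · intro x hx
          rw [SimpleGraph.mem_neighborFinset] at hx
          match x with
          | Sum.inl a =>
            fin_cases i
            · obtain rfl := (hv₁ a).mp hx.symm; simp
            · obtain rfl := (hv₂ a).mp hx.symm; simp
          | Sum.inr j => exact absurd hx (hnew i j)
        · exact le_trans (Finset.card_insert_le _ _) (by simp)
    · unfold numColors
      rw [show G'.edgeFinset.image (χ ∘ Sym2.map (gmap v))
          = (G'.edgeFinset.image (Sym2.map (gmap v))).image χ from (Finset.image_image).symm,
        hEA]
  -- direction B: coloring of G' gives coloring of G
  have dirB : ∀ χ' : Sym2 (V ⊕ Fin 2) → ℕ, IsFeasible G' χ' →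
      IsFeasible G (χ' ∘ Fmap v u₁ u₂) ∧
      numColors G (χ' ∘ Fmap v u₁ u₂) = numColors G' χ' := by
    intro χ' hχ'
    constructor
    · intro a
      by_cases hav : a = v
      · subst hav
        refine le_trans Finset.card_image_le ?_
        rw [SimpleGraph.card_neighborFinset_eq_degree, hdeg]
      · refine le_trans (Finset.card_le_card ?_) (hχ' (Sum.inl a))
        intro x hx
        simp only [seenColors, Finset.mem_image, SimpleGraph.mem_neighborFinset] at hx ⊢
        obtain ⟨b, hb, rfl⟩ := hx
        by_cases hbv : b = v
        · subst hbv
          rcases (hadjv a).mp hb.symm with rfl | rfl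
          · exact ⟨Sum.inr 0, (hv₁ a).mpr rfl, by simp only [Function.comp_apply, hF1']⟩
          · exact ⟨Sum.inr 1, (hv₂ a).mpr rfl, by simp only [Function.comp_apply, hF2']⟩
        · exact ⟨Sum.inl b, (hVV a b).mpr ⟨hb, hav, hbv⟩, by
            simp only [Function.comp_apply, hFne a b hav hbv]⟩
    · unfold numColors
      rw [show G.edgeFinset.image (χ' ∘ Fmap v u₁ u₂)
          = (G.edgeFinset.image (Fmap v u₁ u₂)).image χ' from (Finset.image_image).symm,
        hFB]
  -- conclude
  unfold optColors
  congr 1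
  ext k
  constructor
  · rintro ⟨χ', hf, rfl⟩
    exact ⟨χ' ∘ Fmap v u₁ u₂, (dirB χ' hf).1, (dirB χ' hf).2⟩
  · rintro ⟨χ, hf, rfl⟩
    exact ⟨χ ∘ Sym2.map (gmap v), (dirA χ hf).1, (dirA χ hf).2⟩
end

section
/- Let G be a simple graph in which no two vertices of degree 1 share a common neighbor, and let χ be a feasible edge 2-coloring of G. Then there exists a feasible edge 2-coloring χ' of G using at least as many colors as χ such that every pendant edge (edge incident to a degree-1 vertex) has a color that appears on no other edge of G. -/
section Aux

variable {V : Type*} [Fintype V] [DecidableEq V] (G : SimpleGraph V) [DecidableRel G.Adj]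

open Classical in
/-- The set of pendant edges whose color is not unique. -/
noncomputable def badSet (χ : Sym2 V → ℕ) : Finset (Sym2 V) :=
  G.edgeFinset.filter (fun g =>
    (∃ u w : V, g = s(u, w) ∧ G.degree u = 1) ∧
    ∃ f ∈ G.edgeFinset, f ≠ g ∧ χ f = χ g)

lemma mem_badSet {χ : Sym2 V → ℕ} {g : Sym2 V} :
    g ∈ badSet G χ ↔ g ∈ G.edgeFinset ∧
      (∃ u w : V, g = s(u, w) ∧ G.degree u = 1) ∧
      ∃ f ∈ G.edgeFinset, f ≠ g ∧ χ f = χ g := by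
  unfold badSet
  exact Finset.mem_filter

lemma seen_subset (χ : Sym2 V → ℕ) (v : V) :
    seenColors G χ v ⊆ G.edgeFinset.image χ := by
  intro y hy
  simp only [seenColors, Finset.mem_image, SimpleGraph.mem_neighborFinset] at hy
  obtain ⟨x, hx, rfl⟩ := hy
  exact Finset.mem_image_of_mem χ (by simp [SimpleGraph.mem_edgeFinset, hx])

lemma seen_card_le_degree (χ : Sym2 V → ℕ) (v : V) :
    (seenColors G χ v).card ≤ G.degree v := by
  classical
  calc (seenColors G χ v).card ≤ (G.neighborFinset v).card := Finset.card_image_le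
    _ = G.degree v := G.card_neighborFinset_eq_degree v

lemma step_lemma
    (hleaves : ∀ a b w : V, a ≠ b → G.degree a = 1 → G.degree b = 1 →
      ¬ (G.Adj w a ∧ G.Adj w b))
    (χ : Sym2 V → ℕ) (hfeas : IsFeasible G χ) {e : Sym2 V}
    (he : e ∈ badSet G χ) :
    ∃ χ'' : Sym2 V → ℕ, IsFeasible G χ'' ∧ numColors G χ ≤ numColors G χ'' ∧
      badSet G χ'' ⊆ (badSet G χ).erase e := by
  classical
  obtain ⟨heE, ⟨u, w, rfl, hu⟩, f0, hf0E, hf0ne, hf0col⟩ := (mem_badSet G).mp he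
  have hadj : G.Adj u w := by
    rwa [SimpleGraph.mem_edgeFinset, SimpleGraph.mem_edgeSet] at heE
  set S := G.edgeFinset.image χ with hS
  set c := χ s(u, w) with hc
  set c' := S.sup id + 1 with hc'
  have hcS : c ∈ S := Finset.mem_image_of_mem χ heE
  have hfresh : ∀ x ∈ S, x ≠ c' := by
    intro x hx
    have := Finset.le_sup (f := id) hx
    simp only [id] at this
    omega
  have hcw : c ∈ seenColors G χ w := by
    simp only [seenColors, Finset.mem_image, SimpleGraph.mem_neighborFinset]
    exact ⟨u, hadj.symm, by rw [Sym2.eq_swap]⟩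
  -- choose the merge color d
  have hD : ∃ d, d ∈ S ∧ (∀ y ∈ seenColors G χ w, y = c ∨ y = d) ∧
      (d ≠ c → d ∈ seenColors G χ w ∧ 2 ≤ G.degree w) := by
    by_cases hd : ∃ d ∈ seenColors G χ w, d ≠ c
    · obtain ⟨d, hdseen, hdc⟩ := hd
      have hcd2 : ({c, d} : Finset ℕ) ⊆ seenColors G χ w := by
        intro z hz
        simp only [Finset.mem_insert, Finset.mem_singleton] at hz
        rcases hz with rfl | rfl
        · exact hcw
        · exact hdseen
      refine ⟨d, seen_subset G χ w hdseen, ?_, fun _ => ⟨hdseen, ?_⟩⟩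
      · intro y hy
        by_contra hcon
        push_neg at hcon
        have hsub : ({y, c, d} : Finset ℕ) ⊆ seenColors G χ w := by
          intro z hz
          simp only [Finset.mem_insert, Finset.mem_singleton] at hz
          rcases hz with rfl | rfl | rfl
          · exact hy
          · exact hcw
          · exact hdseen
        have hcard : ({y, c, d} : Finset ℕ).card = 3 := by
          rw [Finset.card_insert_of_notMem (by simp [hcon.1, hcon.2]),
            Finset.card_insert_of_notMem (by simp [Ne.symm hdc]),
            Finset.card_singleton]
        have := Finset.card_le_card hsub
        have := hfeas w
        omega
      · have h2 : ({c, d} : Finset ℕ).card = 2 := by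
          rw [Finset.card_insert_of_notMem (by simp [Ne.symm hdc]),
            Finset.card_singleton]
        have := Finset.card_le_card hcd2
        have := seen_card_le_degree G χ w
        omega
    · push_neg at hd
      exact ⟨c, hcS, fun y hy => Or.inl (hd y hy), fun h => absurd rfl h⟩
  obtain ⟨d, hdS, hseenw, hdprop⟩ := hD
  set σ : ℕ → ℕ := fun x => if x = c then d else x with hσ
  have hσS : ∀ x ∈ S, σ x ∈ S := by
    intro x hx
    simp only [hσ]
    split
    · exact hdS
    · exact hx
  refine ⟨fun f => if f = s(u, w) then c' else σ (χ f), ?_, ?_, ?_⟩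
  · -- feasibility
    intro v
    by_cases hvw : v = w
    · rw [hvw]
      have hsub : seenColors G (fun f => if f = s(u, w) then c' else σ (χ f)) w
          ⊆ {c', d} := by
        intro y hy
        simp only [seenColors, Finset.mem_image, SimpleGraph.mem_neighborFinset] at hy
        obtain ⟨x, hx, rfl⟩ := hy
        by_cases hxu : x = u
        · subst hxu
          rw [if_pos (Sym2.eq_swap)]
          simp
        · have hne : s(w, x) ≠ s(u, w) := by
            intro h
            rcases Sym2.eq_iff.mp h with ⟨rfl, rfl⟩ | ⟨-, rfl⟩
            · exact hadj.ne rfl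
            · exact hxu rfl
          rw [if_neg hne]
          have hyd : σ (χ s(w, x)) = d := by
            have := hseenw (χ s(w, x)) (by
              simp only [seenColors, Finset.mem_image, SimpleGraph.mem_neighborFinset]
              exact ⟨x, hx, rfl⟩)
            rcases this with h | h
            · rw [h]; simp [hσ]
            · rw [h]; simp only [hσ]; split <;> rfl
          rw [hyd]
          simp
      calc _ ≤ ({c', d} : Finset ℕ).card := Finset.card_le_card hsub
        _ ≤ 2 := by
            refine le_trans (Finset.card_insert_le _ _) ?_
            simp
    · by_cases hvu : v = u
      · rw [hvu]
        calc _ ≤ G.degree u := seen_card_le_degree G _ u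
          _ ≤ 2 := by omega
      · have hsub : seenColors G (fun f => if f = s(u, w) then c' else σ (χ f)) v
            ⊆ (seenColors G χ v).image σ := by
          intro y hy
          simp only [seenColors, Finset.mem_image, SimpleGraph.mem_neighborFinset] at hy ⊢
          obtain ⟨x, hx, rfl⟩ := hy
          have hne : s(v, x) ≠ s(u, w) := by
            intro h
            rcases Sym2.eq_iff.mp h with ⟨rfl, rfl⟩ | ⟨rfl, rfl⟩
            · exact hvu rfl
            · exact hvw rfl
          rw [if_neg hne]
          exact ⟨χ s(v, x), ⟨x, hx, rfl⟩, rfl⟩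
        calc _ ≤ ((seenColors G χ v).image σ).card := Finset.card_le_card hsub
          _ ≤ (seenColors G χ v).card := Finset.card_image_le
          _ ≤ 2 := hfeas v
  · -- numColors
    have hsub : insert c' (S.erase c) ⊆
        G.edgeFinset.image (fun f => if f = s(u, w) then c' else σ (χ f)) := by
      intro y hy
      rcases Finset.mem_insert.mp hy with rfl | hy
      · exact Finset.mem_image.mpr ⟨s(u, w), heE, if_pos rfl⟩
      · obtain ⟨hyc, hyS⟩ := Finset.mem_erase.mp hy
        obtain ⟨f, hfE, rfl⟩ := Finset.mem_image.mp hyS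
        refine Finset.mem_image.mpr ⟨f, hfE, ?_⟩
        have hfne : f ≠ s(u, w) := by
          intro h
          rw [h] at hyc
          exact hyc rfl
        rw [if_neg hfne]
        simp only [hσ, if_neg hyc]
    have hc'notmem : c' ∉ S.erase c := fun hmem =>
      hfresh c' (Finset.mem_of_mem_erase hmem) rfl
    have hScard : 1 ≤ S.card := Finset.card_pos.mpr ⟨c, hcS⟩
    have : (insert c' (S.erase c)).card = S.card := by
      rw [Finset.card_insert_of_notMem hc'notmem, Finset.card_erase_of_mem hcS]
      omega
    calc numColors G χ = S.card := rfl
      _ = (insert c' (S.erase c)).card := this.symm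
      _ ≤ _ := Finset.card_le_card hsub
  · -- badSet decreases
    intro g hg
    obtain ⟨hgE, hgPend, f, hfE, hfg, hcol⟩ := (mem_badSet G).mp hg
    have hge : g ≠ s(u, w) := by
      rintro rfl
      rw [if_pos rfl, if_neg hfg] at hcol
      exact hfresh _ (hσS _ (Finset.mem_image_of_mem χ hfE)) hcol
    rw [Finset.mem_erase]
    refine ⟨hge, (mem_badSet G).mpr ⟨hgE, hgPend, ?_⟩⟩
    have hfe : f ≠ s(u, w) := by
      rintro rfl
      rw [if_pos rfl, if_neg hge] at hcol
      exact hfresh _ (hσS _ (Finset.mem_image_of_mem χ hgE)) hcol.symm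
    rw [if_neg hfe, if_neg hge] at hcol
    by_cases hfgcol : χ f = χ g
    · exact ⟨f, hfE, hfg, hfgcol⟩
    by_cases hgc : χ g = c
    · exact ⟨s(u, w), heE, Ne.symm hge, by rw [← hc, ← hgc]⟩
    have hσg : σ (χ g) = χ g := if_neg hgc
    by_cases hfc : χ f = c
    · have hdg : d = χ g := by
        rw [hσg] at hcol
        rw [← hcol]
        simp only [hσ, if_pos hfc]
      have hdc : d ≠ c := hdg ▸ hgc
      obtain ⟨hdseen, hdegw⟩ := hdprop hdc
      simp only [seenColors, Finset.mem_image, SimpleGraph.mem_neighborFinset] at hdseen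
      obtain ⟨x, hxadj, hxcol⟩ := hdseen
      by_cases hf2 : s(w, x) = g
      · exfalso
        obtain ⟨a, b, hab, ha⟩ := hgPend
        rw [← hf2] at hab
        rcases Sym2.eq_iff.mp hab with ⟨rfl, rfl⟩ | ⟨rfl, rfl⟩
        · omega
        · -- x = a has degree 1 (here a := x after rfl), b = w
          have hxu : x ≠ u := by
            rintro rfl
            exact hge (by rw [← hf2, Sym2.eq_swap])
          exact hleaves x u w hxu ha hu ⟨hxadj, hadj.symm⟩
      · exact ⟨s(w, x), by simp [SimpleGraph.mem_edgeFinset, hxadj], hf2,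
          by rw [hxcol, hdg]⟩
    · have hσf : σ (χ f) = χ f := if_neg hfc
      rw [hσf, hσg] at hcol
      exact absurd hcol hfgcol

lemma main_aux
    (hleaves : ∀ a b w : V, a ≠ b → G.degree a = 1 → G.degree b = 1 →
      ¬ (G.Adj w a ∧ G.Adj w b)) :
    ∀ n : ℕ, ∀ χ : Sym2 V → ℕ, IsFeasible G χ → (badSet G χ).card ≤ n →
      ∃ χ' : Sym2 V → ℕ, IsFeasible G χ' ∧ numColors G χ ≤ numColors G χ' ∧
        badSet G χ' = ∅ := by
  intro n
  induction n with
  | zero =>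
    intro χ hfeas hcard
    exact ⟨χ, hfeas, le_refl _, Finset.card_eq_zero.mp (Nat.le_zero.mp hcard)⟩
  | succ n ih =>
    intro χ hfeas hcard
    rcases Finset.eq_empty_or_nonempty (badSet G χ) with hemp | ⟨e, he⟩
    · exact ⟨χ, hfeas, le_refl _, hemp⟩
    · obtain ⟨χ'', hfeas'', hnum'', hsub''⟩ := step_lemma G hleaves χ hfeas he
      have hcard'' : (badSet G χ'').card ≤ n := by
        have h1 : (badSet G χ'').card ≤ ((badSet G χ).erase e).card :=
          Finset.card_le_card hsub''
        have h2 : ((badSet G χ).erase e).card = (badSet G χ).card - 1 :=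
          Finset.card_erase_of_mem he
        have h3 : 1 ≤ (badSet G χ).card := Finset.card_pos.mpr ⟨e, he⟩
        omega
      obtain ⟨χ', hfeas', hnum', hemp'⟩ := ih χ'' hfeas'' hcard''
      exact ⟨χ', hfeas', le_trans hnum'' hnum', hemp'⟩

end Aux

theorem stmt8 {V : Type*} [Fintype V] [DecidableEq V] (G : SimpleGraph V)
    [DecidableRel G.Adj]
    (hleaves : ∀ a b w : V, a ≠ b → G.degree a = 1 → G.degree b = 1 →
      ¬ (G.Adj w a ∧ G.Adj w b))
    (χ : Sym2 V → ℕ) (hfeas : IsFeasible G χ) :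
    ∃ χ' : Sym2 V → ℕ, IsFeasible G χ' ∧ numColors G χ ≤ numColors G χ' ∧
      ∀ u w : V, G.Adj u w → G.degree u = 1 →
        ∀ f ∈ G.edgeFinset, f ≠ s(u, w) → χ' f ≠ χ' s(u, w) := by
  obtain ⟨χ', hfeas', hnum', hemp'⟩ :=
    main_aux G hleaves (badSet G χ).card χ hfeas (le_refl _)
  refine ⟨χ', hfeas', hnum', ?_⟩
  intro u w hadj hu f hfE hfne hcol
  have hmem : s(u, w) ∈ badSet G χ' :=
    (mem_badSet G).mpr ⟨by simp [SimpleGraph.mem_edgeFinset, hadj], ⟨u, w, rfl, hu⟩,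
      f, hfE, hfne, hcol⟩
  rw [hemp'] at hmem
  exact absurd hmem (Finset.notMem_empty _)
end

section
/- Let G be a simple graph with a feasible edge 2-coloring χ and let T = {u, v, w} be a triangle in G such that χ assigns at most 2 distinct colors to the edges of T. If the vertices of T see at most 2 colors each, and each of u, v is incident to exactly one edge outside T (a needle) and w is incident to edges outside T of a single color c, then there is a feasible edge 2-coloring χ' of G with the same number of colors as χ in which all three edges of T receive the same color. -/
/-- Aux: in a set of card ≤ 2 containing `p ≠ q` and `r`, `r` equals `p` or `q`. -/
lemma stmt10_mem2 {s : Finset ℕ} (h : s.card ≤ 2) {p q r : ℕ}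
    (hp : p ∈ s) (hq : q ∈ s) (hr : r ∈ s) (hpq : p ≠ q) : r = p ∨ r = q := by
  by_contra hc
  push_neg at hc
  have hsub : ({p, q, r} : Finset ℕ) ⊆ s := by
    intro z hz
    simp only [Finset.mem_insert, Finset.mem_singleton] at hz
    rcases hz with rfl | rfl | rfl <;> assumption
  have h3 : ({p, q, r} : Finset ℕ).card = 3 := by
    rw [Finset.card_insert_of_notMem (by simp [hpq, Ne.symm hc.1]),
        Finset.card_insert_of_notMem (by simp [Ne.symm hc.2])]
    simp
  have := Finset.card_le_card hsub
  omega

set_option maxHeartbeats 1600000 in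
theorem stmt10 {V : Type*} [Fintype V] [DecidableEq V] (G : SimpleGraph V)
    [DecidableRel G.Adj] (χ : Sym2 V → ℕ) (hfeas : IsFeasible G χ)
    (u v w : V) (huv : G.Adj u v) (hvw : G.Adj v w) (huw : G.Adj u w)
    (hT : ({χ s(u, v), χ s(v, w), χ s(u, w)} : Finset ℕ).card ≤ 2)
    (hseen : ∀ x ∈ ({u, v, w} : Finset V), (seenColors G χ x).card ≤ 2)
    (hu : (G.neighborFinset u \ {v, w}).card = 1)
    (hv : (G.neighborFinset v \ {u, w}).card = 1)
    (c : ℕ)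
    (hw : ∀ x : V, G.Adj w x → x ∉ ({u, v} : Finset V) → χ s(w, x) = c) :
    ∃ χ' : Sym2 V → ℕ, IsFeasible G χ' ∧ numColors G χ' = numColors G χ ∧
      χ' s(u, v) = χ' s(v, w) ∧ χ' s(v, w) = χ' s(u, w) := by
  classical
  have huv' : u ≠ v := huv.ne
  have hvw' : v ≠ w := hvw.ne
  have huw' : u ≠ w := huw.ne
  -- the needles
  obtain ⟨nu, hnu⟩ := Finset.card_eq_one.mp hu
  have hnu' : nu ∈ G.neighborFinset u \ {v, w} := hnu ▸ Finset.mem_singleton_self nu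
  simp only [Finset.mem_sdiff, SimpleGraph.mem_neighborFinset, Finset.mem_insert,
    Finset.mem_singleton, not_or] at hnu'
  obtain ⟨hadjnu, hnuv, hnuw⟩ := hnu'
  obtain ⟨nv, hnv⟩ := Finset.card_eq_one.mp hv
  have hnv' : nv ∈ G.neighborFinset v \ {u, w} := hnv ▸ Finset.mem_singleton_self nv
  simp only [Finset.mem_sdiff, SimpleGraph.mem_neighborFinset, Finset.mem_insert,
    Finset.mem_singleton, not_or] at hnv'
  obtain ⟨hadjnv, hnvu, hnvw⟩ := hnv'
  -- the triangle edge set and the off-triangle color set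
  set T : Finset (Sym2 V) := {s(u, v), s(v, w), s(u, w)} with hTdef
  set S : Finset ℕ := (G.edgeFinset \ T).image χ with hSdef
  -- needles are off-triangle edges
  have hnuT : s(u, nu) ∉ T := by
    simp only [hTdef, Finset.mem_insert, Finset.mem_singleton, Sym2.eq_iff]
    tauto
  have hnvT : s(v, nv) ∉ T := by
    simp only [hTdef, Finset.mem_insert, Finset.mem_singleton, Sym2.eq_iff]
    tauto
  have hdS : χ s(u, nu) ∈ S :=
    Finset.mem_image.mpr ⟨s(u, nu), Finset.mem_sdiff.mpr
      ⟨SimpleGraph.mem_edgeFinset.mpr hadjnu, hnuT⟩, rfl⟩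
  have hd'S : χ s(v, nv) ∈ S :=
    Finset.mem_image.mpr ⟨s(v, nv), Finset.mem_sdiff.mpr
      ⟨SimpleGraph.mem_edgeFinset.mpr hadjnv, hnvT⟩, rfl⟩
  -- membership facts in seen sets
  have hmem : ∀ (a b : V), G.Adj a b → χ s(a, b) ∈ seenColors G χ a := by
    intro a b hab
    exact Finset.mem_image.mpr ⟨b, by simpa using hab, rfl⟩
  have hmem' : ∀ (a b : V), G.Adj a b → χ s(a, b) ∈ seenColors G χ b := by
    intro a b hab
    refine Finset.mem_image.mpr ⟨a, by simpa using hab.symm, ?_⟩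
    rw [Sym2.eq_swap]
  -- a helper to build the key color equation
  have helper : ∀ p q : ℕ, p ∈ S →
      (q = χ s(u,v) ∨ q = χ s(v,w) ∨ q = χ s(u,w)) →
      (∀ r, (r = χ s(u,v) ∨ r = χ s(v,w) ∨ r = χ s(u,w)) → r = p ∨ r = q) →
      insert q S = S ∪ {χ s(u,v), χ s(v,w), χ s(u,w)} := by
    intro p q hp hq habs
    apply Finset.Subset.antisymm
    · intro z hz
      rcases Finset.mem_insert.mp hz with rfl | hz
      · apply Finset.mem_union_right
        simpa only [Finset.mem_insert, Finset.mem_singleton] using hq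
      · exact Finset.mem_union_left _ hz
    · intro z hz
      rcases Finset.mem_union.mp hz with hz | hz
      · exact Finset.mem_insert_of_mem hz
      · simp only [Finset.mem_insert, Finset.mem_singleton] at hz
        rcases habs z hz with rfl | rfl
        · exact Finset.mem_insert_of_mem hp
        · exact Finset.mem_insert_self _ _
  -- the key: some color x with insert x S = S ∪ triangle colors
  have key : ∃ x, insert x S = S ∪ {χ s(u,v), χ s(v,w), χ s(u,w)} := by
    by_cases h1 : χ s(u,v) = χ s(u,w)
    · by_cases h2 : χ s(v,w) = χ s(u,v)
      · refine ⟨χ s(u,v), ?_⟩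
        ext z
        simp only [h2, ← h1, Finset.mem_insert, Finset.mem_union, Finset.mem_singleton]
        tauto
      · -- a = g, b ≠ a : look at v's needle
        have hd' : χ s(v,nv) = χ s(u,v) ∨ χ s(v,nv) = χ s(v,w) :=
          stmt10_mem2 (hfeas v) (hmem' u v huv) (hmem v w hvw) (hmem v nv hadjnv)
            (fun h => h2 h.symm)
        rcases hd' with hd' | hd'
        · refine ⟨χ s(v,w), helper (χ s(u,v)) (χ s(v,w)) (hd' ▸ hd'S)
            (Or.inr (Or.inl rfl)) ?_⟩
          intro r hr
          rcases hr with rfl | rfl | rfl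
          · exact Or.inl rfl
          · exact Or.inr rfl
          · exact Or.inl h1.symm
        · refine ⟨χ s(u,v), helper (χ s(v,w)) (χ s(u,v)) (hd' ▸ hd'S)
            (Or.inl rfl) ?_⟩
          intro r hr
          rcases hr with rfl | rfl | rfl
          · exact Or.inr rfl
          · exact Or.inl rfl
          · exact Or.inr h1.symm
    · -- a ≠ g : look at u's needle; also b ∈ {a, g}
      have hb : χ s(v,w) = χ s(u,v) ∨ χ s(v,w) = χ s(u,w) :=
        stmt10_mem2 hT (by simp) (by simp) (by simp) h1
      have hd : χ s(u,nu) = χ s(u,v) ∨ χ s(u,nu) = χ s(u,w) :=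
        stmt10_mem2 (hfeas u) (hmem u v huv) (hmem u w huw) (hmem u nu hadjnu) h1
      rcases hd with hd | hd
      · refine ⟨χ s(u,w), helper (χ s(u,v)) (χ s(u,w)) (hd ▸ hdS)
          (Or.inr (Or.inr rfl)) ?_⟩
        intro r hr
        rcases hr with rfl | rfl | rfl
        · exact Or.inl rfl
        · exact hb
        · exact Or.inr rfl
      · refine ⟨χ s(u,v), helper (χ s(u,w)) (χ s(u,v)) (hd ▸ hdS)
          (Or.inl rfl) ?_⟩
        intro r hr
        rcases hr with rfl | rfl | rfl
        · exact Or.inr rfl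
        · exact hb.symm
        · exact Or.inl rfl
  obtain ⟨x, hxeq⟩ := key
  -- the new coloring
  set χ' : Sym2 V → ℕ :=
    fun e => if e = s(u,v) ∨ e = s(v,w) ∨ e = s(u,w) then x else χ e with hχ'def
  have hχ'T : ∀ e, (e = s(u,v) ∨ e = s(v,w) ∨ e = s(u,w)) → χ' e = x := by
    intro e he; simp only [hχ'def]; rw [if_pos he]
  have hχ'N : ∀ e, e ∉ T → χ' e = χ e := by
    intro e he
    simp only [hTdef, Finset.mem_insert, Finset.mem_singleton] at he
    simp only [hχ'def]; rw [if_neg he]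
  have hTmem : ∀ e, (e = s(u,v) ∨ e = s(v,w) ∨ e = s(u,w)) → e ∈ T := by
    intro e he
    simp only [hTdef, Finset.mem_insert, Finset.mem_singleton]
    exact he
  clear_value χ' S T
  refine ⟨χ', ?_, ?_, ?_, ?_⟩
  · -- feasibility
    intro z
    by_cases hzu : z = u
    · subst hzu
      have hsub : seenColors G χ' z ⊆ insert x {χ s(z, nu)} := by
        intro col hcol
        obtain ⟨y, hy, rfl⟩ := Finset.mem_image.mp hcol
        rw [SimpleGraph.mem_neighborFinset] at hy
        by_cases h : y = v
        · subst h
          rw [hχ'T _ (Or.inl rfl)]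
          exact Finset.mem_insert_self _ _
        · by_cases h' : y = w
          · subst h'
            rw [hχ'T _ (Or.inr (Or.inr rfl))]
            exact Finset.mem_insert_self _ _
          · have : y ∈ G.neighborFinset z \ {v, w} := by
              simp [SimpleGraph.mem_neighborFinset, hy, h, h']
            rw [hnu, Finset.mem_singleton] at this
            subst this
            rw [hχ'N _ hnuT]
            exact Finset.mem_insert_of_mem (Finset.mem_singleton_self _)
      calc (seenColors G χ' z).card ≤ (insert x {χ s(z, nu)} : Finset ℕ).card :=
            Finset.card_le_card hsub
        _ ≤ 2 := by
            refine le_trans (Finset.card_insert_le _ _) ?_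
            simp
    · by_cases hzv : z = v
      · subst hzv
        have hsub : seenColors G χ' z ⊆ insert x {χ s(z, nv)} := by
          intro col hcol
          obtain ⟨y, hy, rfl⟩ := Finset.mem_image.mp hcol
          rw [SimpleGraph.mem_neighborFinset] at hy
          by_cases h : y = u
          · subst h
            rw [hχ'T _ (Or.inl (Sym2.eq_swap))]
            exact Finset.mem_insert_self _ _
          · by_cases h' : y = w
            · subst h'
              rw [hχ'T _ (Or.inr (Or.inl rfl))]
              exact Finset.mem_insert_self _ _
            · have : y ∈ G.neighborFinset z \ {u, w} := by
                simp [SimpleGraph.mem_neighborFinset, hy, h, h']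
              rw [hnv, Finset.mem_singleton] at this
              subst this
              rw [hχ'N _ hnvT]
              exact Finset.mem_insert_of_mem (Finset.mem_singleton_self _)
        calc (seenColors G χ' z).card ≤ (insert x {χ s(z, nv)} : Finset ℕ).card :=
              Finset.card_le_card hsub
          _ ≤ 2 := by
              refine le_trans (Finset.card_insert_le _ _) ?_
              simp
      · by_cases hzw : z = w
        · subst hzw
          have hsub : seenColors G χ' z ⊆ insert x {c} := by
            intro col hcol
            obtain ⟨y, hy, rfl⟩ := Finset.mem_image.mp hcol
            rw [SimpleGraph.mem_neighborFinset] at hy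
            by_cases h : y = u
            · subst h
              rw [hχ'T _ (Or.inr (Or.inr (Sym2.eq_swap)))]
              exact Finset.mem_insert_self _ _
            · by_cases h' : y = v
              · subst h'
                rw [hχ'T _ (Or.inr (Or.inl (Sym2.eq_swap)))]
                exact Finset.mem_insert_self _ _
              · have hzu2 : ¬ z = u := fun hh => huw' hh.symm
                have hzv2 : ¬ z = v := fun hh => hvw' hh.symm
                have hyT : s(z, y) ∉ T := by
                  simp only [hTdef, Finset.mem_insert, Finset.mem_singleton, Sym2.eq_iff]
                  push_neg
                  tauto
                rw [hχ'N _ hyT, hw y hy (by simp [h, h'])]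
                exact Finset.mem_insert_of_mem (Finset.mem_singleton_self _)
          calc (seenColors G χ' z).card ≤ (insert x {c} : Finset ℕ).card :=
                Finset.card_le_card hsub
            _ ≤ 2 := by
                refine le_trans (Finset.card_insert_le _ _) ?_
                simp
        · -- z not a triangle vertex: seen colors unchanged
          have : seenColors G χ' z = seenColors G χ z := by
            apply Finset.image_congr
            intro y hy
            show χ' s(z, y) = χ s(z, y)
            apply hχ'N
            simp only [hTdef, Finset.mem_insert, Finset.mem_singleton, Sym2.eq_iff]
            push_neg
            tauto
          rw [this]
          exact hfeas z
  · -- numColors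
    have hTsub : T ⊆ G.edgeFinset := by
      intro e he
      simp only [hTdef, Finset.mem_insert, Finset.mem_singleton] at he
      rcases he with rfl | rfl | rfl <;>
        exact SimpleGraph.mem_edgeFinset.mpr (by assumption)
    have hsplit : G.edgeFinset \ T ∪ T = G.edgeFinset := Finset.sdiff_union_of_subset hTsub
    have himg' : G.edgeFinset.image χ' = S ∪ {x} := by
      rw [← hsplit, Finset.image_union]
      congr 1
      · rw [hSdef]
        apply Finset.image_congr
        intro e he
        exact hχ'N e (Finset.mem_sdiff.mp he).2
      · rw [hTdef]
        rw [Finset.image_insert, Finset.image_insert, Finset.image_singleton,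
          hχ'T _ (Or.inl rfl), hχ'T _ (Or.inr (Or.inl rfl)), hχ'T _ (Or.inr (Or.inr rfl))]
        simp
    have himg : G.edgeFinset.image χ = S ∪ {χ s(u,v), χ s(v,w), χ s(u,w)} := by
      rw [← hsplit, Finset.image_union, ← hSdef]
      congr 1
      rw [hTdef, Finset.image_insert, Finset.image_insert, Finset.image_singleton]
    rw [numColors, numColors, himg', himg]
    have hunion : S ∪ {x} = insert x S := by
      ext z
      simp only [Finset.mem_union, Finset.mem_singleton, Finset.mem_insert]
      tauto
    rw [hunion, hxeq]
  · rw [hχ'T _ (Or.inl rfl), hχ'T _ (Or.inr (Or.inl rfl))]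
  · rw [hχ'T _ (Or.inr (Or.inl rfl)), hχ'T _ (Or.inr (Or.inr rfl))]
end

section
/- Let G be a connected simple claw-free graph on an even number of vertices. Then G has a perfect matching. -/
/-!
Induct on the number of vertices: it suffices to find an edge `vw` such that `G - v - w` is
still connected, since induced subgraphs of claw-free graphs are claw-free.

If `G` is complete any edge works. Otherwise pick `u` and a vertex `v` farthest from `u`, at
distance `d ≥ 2`, a neighbour `w` of `v` at distance `d - 1` and a neighbour `b` of `w` at
distance `d - 2`. Along a shortest path from `u`, every vertex `z ∉ {v, w}` is either reachable
from `u` avoiding `v` and `w`, or adjacent to `w`. If all of them are reachable, remove `vw`.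
Otherwise an unreachable `x` is adjacent to `w` but not to `b`, and `b` is not adjacent to `v`,
so the absence of a claw at `w` forces `vx` to be an edge; after removing `v` and `x`, every
vertex is joined to `u` either directly or through `b` and `w`.
-/

/-- A graph is claw-free if no vertex has three pairwise non-adjacent
neighbors. -/
def ClawFree {V : Type*} (G : SimpleGraph V) : Prop :=
  ¬ ∃ v a b c : V, a ≠ b ∧ a ≠ c ∧ b ≠ c ∧
    G.Adj v a ∧ G.Adj v b ∧ G.Adj v c ∧
    ¬ G.Adj a b ∧ ¬ G.Adj a c ∧ ¬ G.Adj b c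

namespace SimpleGraph

variable {V : Type*} {G : SimpleGraph V}

theorem Walk.dist_add_dist_le_length {u y z : V} (p : G.Walk u z) (hy : y ∈ p.support) :
    G.dist u y + G.dist y z ≤ p.length := by
  classical
  rw [← p.take_spec hy, Walk.length_append]
  exact add_le_add (G.dist_le _) (G.dist_le _)

theorem Reachable.exists_adj_dist_add_one {u z : V} (hr : G.Reachable u z) (hz : u ≠ z) :
    ∃ y, G.Adj y z ∧ G.dist u y + 1 = G.dist u z := by
  obtain ⟨p, hp⟩ := hr.exists_walk_length_eq_dist
  have hnil : ¬p.Nil := fun h => hz h.eq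
  have hadj := p.adj_penultimate hnil
  have hle : G.dist u p.penultimate + G.dist p.penultimate z ≤ p.length :=
    p.dist_add_dist_le_length (p.getVert_mem_support _)
  have hge := hadj.reachable.dist_triangle_right u
  rw [dist_eq_one_iff_adj.mpr hadj] at hle hge
  exact ⟨p.penultimate, hadj, by omega⟩

def ReachableWithin (G : SimpleGraph V) (s : Set V) (u z : V) : Prop :=
  ∃ p : G.Walk u z, ∀ y ∈ p.support, y ∈ s

namespace ReachableWithin

variable {s t : Set V} {u y z : V}

theorem mono (h : G.ReachableWithin s u z) (hst : s ⊆ t) : G.ReachableWithin t u z :=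
  let ⟨p, hp⟩ := h
  ⟨p, fun y hy => hst (hp y hy)⟩

theorem mem_left (h : G.ReachableWithin s u z) : u ∈ s :=
  let ⟨p, hp⟩ := h
  hp u p.start_mem_support

theorem mem_right (h : G.ReachableWithin s u z) : z ∈ s :=
  let ⟨p, hp⟩ := h
  hp z p.end_mem_support

theorem concat (h : G.ReachableWithin s u z) (hzy : G.Adj z y) (hy : y ∈ s) :
    G.ReachableWithin s u y := by
  obtain ⟨p, hp⟩ := h
  refine ⟨p.concat hzy, fun x hx => ?_⟩
  rw [Walk.support_concat, List.mem_append, List.mem_singleton] at hx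
  exact hx.elim (hp x) (· ▸ hy)

theorem within_reachableWithin (h : G.ReachableWithin s u z) :
    G.ReachableWithin {y | G.ReachableWithin s u y} u z := by
  classical
  obtain ⟨p, hp⟩ := h
  exact ⟨p, fun y hy => ⟨p.takeUntil y hy,
    fun x hx => hp x (p.support_takeUntil_subset_support hy hx)⟩⟩

end ReachableWithin

theorem connected_induce_of_forall_reachableWithin {s : Set V} {u : V} (hu : u ∈ s)
    (h : ∀ z ∈ s, G.ReachableWithin s u z) : (G.induce s).Connected := by
  refine induce_connected_of_patches u hu fun hz => ?_
  obtain ⟨p, hp⟩ := h _ hz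
  exact ⟨_, hp, p.start_mem_support, p.end_mem_support, p.connected_induce_support _ _⟩


theorem reachableWithin_or_adj_of_forall_dist_le (hconn : G.Connected) {u v w z : V}
    (hv : ∀ y, G.dist u y ≤ G.dist u v) (hw : G.dist u w + 1 = G.dist u v)
    (hz : z ∈ ({v, w}ᶜ : Set V)) : G.ReachableWithin {v, w}ᶜ u z ∨ G.Adj w z := by
  classical
  simp only [Set.mem_compl_iff, Set.mem_insert_iff, Set.mem_singleton_iff, not_or] at hz
  obtain ⟨p, hp⟩ := hconn.exists_walk_length_eq_dist u z
  have hzv := hv z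
  by_cases hvp : v ∈ p.support
  · have := p.dist_add_dist_le_length hvp
    have := hconn.pos_dist_of_ne (Ne.symm hz.1)
    omega
  by_cases hwp : w ∈ p.support
  · have := p.dist_add_dist_le_length hwp
    have := hconn.pos_dist_of_ne (Ne.symm hz.2)
    exact .inr (dist_eq_one_iff_adj.mp (by omega))
  · refine .inl ⟨p, fun y hy => ?_⟩
    simp only [Set.mem_compl_iff, Set.mem_insert_iff, Set.mem_singleton_iff, not_or]
    exact ⟨fun h => hvp (h ▸ hy), fun h => hwp (h ▸ hy)⟩

theorem Adj.isPerfectMatching_subgraphOfAdj_sup_map {v w : V} (h : G.Adj v w)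
    {M : (G.induce {v, w}ᶜ).Subgraph} (hM : M.IsPerfectMatching) :
    (G.subgraphOfAdj h ⊔ M.map (Embedding.induce _).toHom).IsPerfectMatching := by
  refine ⟨(Subgraph.IsMatching.subgraphOfAdj h).sup (hM.1.map _ Subtype.val_injective) ?_,
    fun z => ?_⟩
  · rw [(Subgraph.IsMatching.subgraphOfAdj h).support_eq_verts,
      (hM.1.map _ Subtype.val_injective).support_eq_verts, Set.disjoint_right]
    rintro _ ⟨z, -, rfl⟩
    exact z.2
  · by_cases hz : z ∈ ({v, w} : Set V)
    · exact .inl (by simpa using hz)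
    · exact .inr ⟨⟨z, hz⟩, hM.2 _, rfl⟩

end SimpleGraph

open SimpleGraph

namespace ClawFree

variable {V : Type*} {G : SimpleGraph V}

theorem of_embedding {W : Type*} {H : SimpleGraph W} (f : H ↪g G) (h : ClawFree G) :
    ClawFree H := by
  rintro ⟨v, a, b, c, hab, hac, hbc, hva, hvb, hvc, hnab, hnac, hnbc⟩
  exact h ⟨f v, f a, f b, f c, f.injective.ne hab, f.injective.ne hac, f.injective.ne hbc,
    f.map_adj_iff.2 hva, f.map_adj_iff.2 hvb, f.map_adj_iff.2 hvc,
    (hnab <| f.map_adj_iff.1 ·), (hnac <| f.map_adj_iff.1 ·), (hnbc <| f.map_adj_iff.1 ·)⟩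

theorem exists_adj_connected_induce_compl_pair_of_farthest (hclaw : ClawFree G)
    (hconn : G.Connected) {u v : V} (hv : ∀ z, G.dist u z ≤ G.dist u v)
    (huv : 2 ≤ G.dist u v) : ∃ x y, G.Adj x y ∧ (G.induce {x, y}ᶜ).Connected := by
  obtain ⟨w, hwv, hw⟩ := (hconn u v).exists_adj_dist_add_one (by rintro rfl; simp at huv)
  obtain ⟨b, hbw, hb⟩ := (hconn u w).exists_adj_dist_add_one (by rintro rfl; simp at hw; omega)
  set s : Set V := {v, w}ᶜ
  have hcover : ∀ z ∈ s, G.ReachableWithin s u z ∨ G.Adj w z := fun z hz =>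
    reachableWithin_or_adj_of_forall_dist_le hconn hv hw hz
  have hbs : G.ReachableWithin s u b := by
    obtain ⟨p, hp⟩ := (hconn u b).exists_walk_length_eq_dist
    refine ⟨p, fun y hy => ?_⟩
    have := p.dist_add_dist_le_length hy
    simp only [s, Set.mem_compl_iff, Set.mem_insert_iff, Set.mem_singleton_iff, not_or]
    constructor <;> rintro rfl <;> omega
  by_cases hall : ∀ z ∈ s, G.ReachableWithin s u z
  · exact ⟨v, w, hwv.symm, connected_induce_of_forall_reachableWithin hbs.mem_left hall⟩
  obtain ⟨x, hxs, hx_unreach⟩ := not_forall₂.mp hall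
  have hwx : G.Adj w x := (hcover x hxs).resolve_left hx_unreach
  have hvx : G.Adj v x := by
    by_contra hvx
    have hbv : ¬G.Adj b v := fun h => by
      have := h.reachable.dist_triangle_right u
      rw [dist_eq_one_iff_adj.mpr h] at this
      omega
    refine hclaw ⟨w, b, v, x, by rintro rfl; omega, fun h => hx_unreach (h ▸ hbs),
      by rintro rfl; simp [s] at hxs, hbw.symm,
      hwv, hwx, hbv, fun h => hx_unreach (hbs.concat h hxs), hvx⟩
  have hU : ∀ {z}, G.ReachableWithin s u z → G.ReachableWithin {v, x}ᶜ u z := fun h =>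
    h.within_reachableWithin.mono fun y hy => by
      simp only [Set.mem_compl_iff, Set.mem_insert_iff, Set.mem_singleton_iff, not_or]
      exact ⟨fun h => hy.mem_right (by simp [h]), fun h => hx_unreach (h ▸ hy)⟩
  have huw : G.ReachableWithin {v, x}ᶜ u w := (hU hbs).concat hbw (by simp [hwv.ne, hwx.ne])
  refine ⟨v, x, hvx, connected_induce_of_forall_reachableWithin huw.mem_left fun z hz => ?_⟩
  by_cases hzw : z = w
  · exact hzw ▸ huw
  · have hzs : z ∈ s := by simp_all [s]
    exact (hcover z hzs).elim hU (huw.concat · hz)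

-- Only preconnected: with two vertices, `{v, w}ᶜ` is empty.
theorem exists_adj_preconnected_induce_compl_pair [Finite V] [Nontrivial V]
    (hclaw : ClawFree G) (hconn : G.Connected) :
    ∃ v w, G.Adj v w ∧ (G.induce {v, w}ᶜ).Preconnected := by
  by_cases hcomplete : ∀ x y, x ≠ y → G.Adj x y
  · obtain ⟨v, w, hvw⟩ := exists_pair_ne V
    refine ⟨v, w, hcomplete v w hvw, fun x y => ?_⟩
    obtain rfl | hxy := eq_or_ne x y
    · rfl
    · exact (induce_adj.2 (hcomplete _ _ (Subtype.coe_ne_coe.2 hxy))).reachable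
  obtain ⟨u, x, hux, hnadj⟩ := by simpa using hcomplete
  obtain ⟨v, hv⟩ := Finite.exists_max (G.dist u)
  obtain ⟨a, b, hab, hab_conn⟩ := hclaw.exists_adj_connected_induce_compl_pair_of_farthest hconn hv
    ((hconn.one_lt_dist_of_ne_of_not_adj hux hnadj).trans_le (hv x))
  exact ⟨a, b, hab, hab_conn.preconnected⟩

theorem exists_isPerfectMatching [Finite V] (hclaw : ClawFree G)
    (hconn : G.Preconnected) (heven : Even (Nat.card V)) :
    ∃ M : G.Subgraph, M.IsPerfectMatching := by
  induction hn : Nat.card V using Nat.strong_induction_on generalizing V with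
  | _ n ih =>
  rcases isEmpty_or_nonempty V with hV | hV
  · exact ⟨⊥, fun v => isEmptyElim v, fun v => isEmptyElim v⟩
  have : Nontrivial V := Finite.one_lt_card_iff_nontrivial.1 <| by
    obtain ⟨k, hk⟩ := heven
    have := Nat.card_pos (α := V)
    omega
  obtain ⟨v, w, hvw, hrest⟩ := hclaw.exists_adj_preconnected_induce_compl_pair ⟨hconn⟩
  have hcard : (({v, w} : Set V)ᶜ).ncard + 2 = n := by
    rw [← Set.ncard_pair hvw.ne, add_comm, Set.ncard_add_ncard_compl, hn]
  obtain ⟨M, hM⟩ := ih _ (by omega) (hclaw.of_embedding (Embedding.induce _)) hrest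
    (by rw [Nat.card_coe_set_eq, Set.even_ncard_compl_iff heven, Set.ncard_pair hvw.ne]; decide)
    (Nat.card_coe_set_eq _)
  exact ⟨_, hvw.isPerfectMatching_subgraphOfAdj_sup_map hM⟩

end ClawFree

theorem stmt12_general {V : Type*} [Fintype V] (G : SimpleGraph V)
    (hconn : G.Connected) (hclaw : ClawFree G)
    (heven : Even (Fintype.card V)) :
    ∃ M : G.Subgraph, M.IsPerfectMatching :=
  hclaw.exists_isPerfectMatching hconn.preconnected (by rwa [Nat.card_eq_fintype_card])

/-- Sumner–Las Vergnas: a connected claw-free graph of even order has a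
perfect matching. -/
theorem stmt12 {V : Type*} [Fintype V] [DecidableEq V] (G : SimpleGraph V)
    [DecidableRel G.Adj] (hconn : G.Connected) (hclaw : ClawFree G)
    (heven : Even (Fintype.card V)) :
    ∃ M : G.Subgraph, M.IsPerfectMatching :=
  stmt12_general G hconn hclaw heven
end

section
/- Let G be a connected simple claw-free graph on an odd number n ≥ 3 of vertices. Then G has a matching of size (n−1)/2. -/
namespace SumnerAux

open SimpleGraph Finset

universe u

variable {V : Type u}

/-- Claw-freeness passes to induced subgraphs. -/
lemma clawFree_induce {G : SimpleGraph V} (h : ClawFree G) (s : Set V) :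
    ClawFree (G.induce s) := by
  rintro ⟨v, a, b, c, h1, h2, h3, h4, h5, h6, h7, h8, h9⟩
  refine h ⟨v, a, b, c, Subtype.coe_injective.ne h1, Subtype.coe_injective.ne h2,
    Subtype.coe_injective.ne h3, ?_, ?_, ?_, ?_, ?_, ?_⟩ <;>
    simpa using ‹_›

/-- Extract the last edge of a walk of positive length. -/
lemma walk_last_edge {G : SimpleGraph V} :
    ∀ {r z : V} (p : G.Walk r z) {k : ℕ}, p.length = k + 1 →
      ∃ (y : V) (q : G.Walk r y), G.Adj y z ∧ q.length = k := by
  intro r z p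
  induction p with
  | nil => intro k h; simp at h
  | @cons a b z h p ih =>
    intro k hk
    rcases k with _ | m
    · have hbz : b = z := SimpleGraph.Walk.eq_of_length_eq_zero (by simpa using hk)
      subst hbz
      exact ⟨a, SimpleGraph.Walk.nil, h, rfl⟩
    · obtain ⟨y, q, hyz, hq⟩ := ih (by simpa using hk)
      exact ⟨y, SimpleGraph.Walk.cons h q, hyz, by simp [hq]⟩

lemma dist_adj_le {G : SimpleGraph V} (hconn : G.Connected) {r y z : V}
    (h : G.Adj y z) : G.dist r z ≤ G.dist r y + 1 := by
  have h1 : G.dist y z ≤ 1 := by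
    simpa using SimpleGraph.dist_le (SimpleGraph.Walk.cons h SimpleGraph.Walk.nil)
  have := hconn.dist_triangle (u := r) (v := y) (w := z)
  omega

/-- The predecessor on a shortest walk. -/
lemma exists_pred {G : SimpleGraph V} (hconn : G.Connected) {r z : V} {k : ℕ}
    (h : G.dist r z = k + 1) : ∃ y, G.Adj y z ∧ G.dist r y = k := by
  obtain ⟨p, hp⟩ := (hconn r z).exists_walk_length_eq_dist
  rw [h] at hp
  obtain ⟨y, q, hyz, hq⟩ := walk_last_edge p hp
  refine ⟨y, hyz, le_antisymm (hq ▸ SimpleGraph.dist_le q) ?_⟩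
  have := dist_adj_le hconn (r := r) hyz
  omega

lemma dist_eq_zero {G : SimpleGraph V} (hconn : G.Connected) {r z : V}
    (h : G.dist r z = 0) : r = z :=
  ((hconn r z).dist_eq_zero_iff).mp h

lemma adj_of_dist_eq_one {G : SimpleGraph V} (hconn : G.Connected) {r z : V}
    (h : G.dist r z = 1) : G.Adj r z := by
  obtain ⟨y, hyz, hy⟩ := exists_pred hconn h
  have := dist_eq_zero hconn hy
  subst this
  exact hyz

lemma induce_adj {G : SimpleGraph V} {s : Set V} {a b : V} (ha : a ∈ s) (hb : b ∈ s)
    (h : G.Adj a b) : (G.induce s).Adj ⟨a, ha⟩ ⟨b, hb⟩ := by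
  simpa using h

/-- Deleting (up to) two vertices of maximal distance from `r` preserves
reachability from `r`. -/
lemma reach_avoid_two {G : SimpleGraph V} (hconn : G.Connected) {r u w : V} {D : ℕ}
    (hD : ∀ z, G.dist r z ≤ D) (hu : G.dist r u = D) (hw : G.dist r w = D)
    (hru : r ≠ u) (hrw : r ≠ w) :
    ∀ z (hzu : z ≠ u) (hzw : z ≠ w),
      (G.induce {x | x ≠ u ∧ x ≠ w}).Reachable ⟨r, ⟨hru, hrw⟩⟩ ⟨z, ⟨hzu, hzw⟩⟩ := by
  have key : ∀ k, ∀ z (hzu : z ≠ u) (hzw : z ≠ w), G.dist r z = k →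
      (G.induce {x | x ≠ u ∧ x ≠ w}).Reachable ⟨r, ⟨hru, hrw⟩⟩ ⟨z, ⟨hzu, hzw⟩⟩ := by
    intro k
    induction k using Nat.strong_induction_on with
    | _ k ih =>
      intro z hzu hzw hk
      rcases k with _ | m
      · obtain rfl := dist_eq_zero hconn hk
        exact SimpleGraph.Reachable.refl _
      · obtain ⟨y, hyz, hy⟩ := exists_pred hconn hk
        have hzD : m + 1 ≤ D := hk ▸ hD z
        have hyu : y ≠ u := fun e => by rw [e, hu] at hy; omega
        have hyw : y ≠ w := fun e => by rw [e, hw] at hy; omega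
        exact (ih m (Nat.lt_succ_self m) y hyu hyw hy).trans
          (SimpleGraph.Adj.reachable (induce_adj (s := {x | x ≠ u ∧ x ≠ w}) ⟨hyu, hyw⟩ ⟨hzu, hzw⟩ hyz))
  exact fun z hzu hzw => key _ z hzu hzw rfl

/-- Case B: top distance level independent; deleting a top vertex together with
one of its neighbors preserves reachability from `r` (uses claw-freeness). -/
lemma reach_avoid_case_b {G : SimpleGraph V} (hconn : G.Connected) (hclaw : ClawFree G)
    {r u v : V} {D : ℕ}
    (hD : ∀ z, G.dist r z ≤ D) (hD2 : 2 ≤ D)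
    (hindep : ∀ a b, G.dist r a = D → G.dist r b = D → ¬ G.Adj a b)
    (hu : G.dist r u = D) (hv : G.dist r v = D - 1) (huv : G.Adj u v)
    (hru : r ≠ u) (hrv : r ≠ v) :
    ∀ z (hzu : z ≠ u) (hzv : z ≠ v),
      (G.induce {x | x ≠ u ∧ x ≠ v}).Reachable ⟨r, ⟨hru, hrv⟩⟩ ⟨z, ⟨hzu, hzv⟩⟩ := by
  have key : ∀ k, ∀ z (hzu : z ≠ u) (hzv : z ≠ v), G.dist r z = k →
      (G.induce {x | x ≠ u ∧ x ≠ v}).Reachable ⟨r, ⟨hru, hrv⟩⟩ ⟨z, ⟨hzu, hzv⟩⟩ := by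
    intro k
    induction k using Nat.strong_induction_on with
    | _ k ih =>
      intro z hzu hzv hk
      rcases k with _ | m
      · obtain rfl := dist_eq_zero hconn hk
        exact SimpleGraph.Reachable.refl _
      · obtain ⟨y, hyz, hy⟩ := exists_pred hconn hk
        have hzD : m + 1 ≤ D := hk ▸ hD z
        have hyu : y ≠ u := fun e => by rw [e, hu] at hy; omega
        by_cases hyv : y = v
        · -- the predecessor is v, so z is on the top level
          subst hyv
          have hm : m = D - 1 := by omega
          have hzD' : G.dist r z = D := by omega
          by_cases hq : ∃ q, G.Adj q z ∧ q ≠ y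
          · obtain ⟨q, hqz, hqy⟩ := hq
            have hq1 : G.dist r z ≤ G.dist r q + 1 := dist_adj_le hconn hqz
            have hq2 : G.dist r q ≤ D := hD q
            have hq3 : G.dist r q ≠ D := fun e => hindep q z e hzD' hqz
            have hqd : G.dist r q = D - 1 := by omega
            have hqu : q ≠ u := fun e => by rw [e, hu] at hqd; omega
            have hqv : q ≠ y := hqy
            exact (ih (D - 1) (by omega) q hqu hqv hqd).trans
              (SimpleGraph.Adj.reachable (induce_adj (s := {x | x ≠ u ∧ x ≠ y}) ⟨hqu, hqv⟩ ⟨hzu, hzv⟩ hqz))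
          · push_neg at hq
            exfalso
            -- get the predecessor b of v, and exhibit the claw (v; u, z, b)
            have hv' : G.dist r y = (D - 2) + 1 := by omega
            obtain ⟨b, hbv, hb⟩ := exists_pred hconn hv'
            refine hclaw ⟨y, u, z, b, ?_, ?_, ?_, huv.symm, hyz, hbv.symm, ?_, ?_, ?_⟩
            · exact fun e => hzu (e.symm)
            · exact fun e => by rw [← e, hu] at hb; omega
            · exact fun e => by rw [← e, hzD'] at hb; omega
            · intro h
              exact huv.ne (hq u h)
            · intro h
              have := dist_adj_le hconn (r := r) h.symm
              omega
            · intro h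
              have := hq b h.symm
              rw [this] at hb
              omega
        · have hyv' : G.dist r y = m := hy
          exact (ih m (Nat.lt_succ_self m) y hyu hyv hy).trans
            (SimpleGraph.Adj.reachable (induce_adj (s := {x | x ≠ u ∧ x ≠ v}) ⟨hyu, hyv⟩ ⟨hzu, hzv⟩ hyz))
  exact fun z hzu hzv => key _ z hzu hzv rfl

lemma connected_induce_of_reach {G : SimpleGraph V} {s : Set V} {r : V} (hr : r ∈ s)
    (h : ∀ z (hz : z ∈ s), (G.induce s).Reachable ⟨r, hr⟩ ⟨z, hz⟩) :
    (G.induce s).Connected := by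
  haveI : Nonempty ↥s := ⟨⟨r, hr⟩⟩
  exact SimpleGraph.Connected.mk (fun a b => (h a.1 a.2).symm.trans (h b.1 b.2))

lemma edgeSet_map {W : Type*} {G : SimpleGraph V} {G' : SimpleGraph W}
    (f : G →g G') (M : G.Subgraph) :
    (M.map f).edgeSet = Sym2.map f '' M.edgeSet := by
  ext e
  refine Sym2.ind (fun a b => ?_) e
  constructor
  · rintro h
    obtain ⟨x, y, hxy, hx, hy⟩ := h
    exact ⟨s(x, y), hxy, by simp [hx, hy]⟩
  · rintro ⟨e', he', hmap⟩
    refine Sym2.ind (fun x y hxy hmap => ?_) e' he' hmap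
    rw [Sym2.map_pair_eq, Sym2.eq_iff] at hmap
    rcases hmap with ⟨hx, hy⟩ | ⟨hx, hy⟩
    · exact ⟨x, y, hxy, hx, hy⟩
    · exact ⟨y, x, hxy.symm, hy, hx⟩

lemma adj_of_card_two {G : SimpleGraph V} [Fintype V] [DecidableEq V] (hconn : G.Connected)
    (h2 : Fintype.card V = 2) : ∃ (a b : V), G.Adj a b ∧ ∀ x, x = a ∨ x = b := by
  obtain ⟨a, b, hab, huniv⟩ := Finset.card_eq_two.mp
    (by rw [Finset.card_univ, h2] : (Finset.univ : Finset V).card = 2)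
  have hmem : ∀ x : V, x = a ∨ x = b := by
    intro x
    have : x ∈ ({a, b} : Finset V) := by rw [← huniv]; exact Finset.mem_univ x
    simpa using this
  obtain ⟨p⟩ := hconn a b
  cases p with
  | nil => exact absurd rfl hab
  | @cons _ c _ h' p' =>
    rcases hmem c with rfl | rfl
    · exact absurd rfl h'.ne
    · exact ⟨a, c, h', hmem⟩

/-- Sumner's theorem: a connected claw-free graph of even order has a perfect
matching (with the expected number of edges). -/
lemma even_pm : ∀ (n : ℕ) {V : Type u} [Fintype V] [DecidableEq V] (G : SimpleGraph V),
    Fintype.card V = n → G.Connected → ClawFree G → Even n →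
    ∃ M : G.Subgraph, M.IsPerfectMatching ∧ M.edgeSet.ncard = n / 2 := by
  intro n
  induction n using Nat.strong_induction_on with
  | _ n ih =>
    intro V _ _ G hcard hconn hclaw heven
    have hne : Nonempty V := hconn.nonempty
    have hpos : 1 ≤ n := hcard ▸ Fintype.card_pos
    have hpos2 : 2 ≤ n := by obtain ⟨m, rfl⟩ := heven; omega
    by_cases h2 : n = 2
    · -- base case
      subst h2
      obtain ⟨a, b, hab, hmem⟩ := adj_of_card_two hconn hcard
      refine ⟨G.subgraphOfAdj hab, ⟨SimpleGraph.Subgraph.IsMatching.subgraphOfAdj hab, ?_⟩, ?_⟩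
      · intro v
        rcases hmem v with rfl | rfl <;> simp
      · rw [SimpleGraph.edgeSet_subgraphOfAdj]
        simp
    · -- n ≥ 4
      have h4 : 4 ≤ n := by
        obtain ⟨m, rfl⟩ := heven
        omega
      -- set up distances
      obtain ⟨r⟩ := hne
      set D := Finset.univ.sup (fun v => G.dist r v) with hDdef
      have hD : ∀ z, G.dist r z ≤ D := fun z => Finset.le_sup (Finset.mem_univ z)
      obtain ⟨u₀, -, hu₀⟩ := Finset.exists_mem_eq_sup Finset.univ ⟨r, Finset.mem_univ r⟩
        (fun v => G.dist r v)
      -- find an edge u'v' whose deletion keeps the rest connected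
      have hfind : ∃ u' v', ∃ (hadj : G.Adj u' v') (hru : r ≠ u') (hrv : r ≠ v'),
          ∀ z (hzu : z ≠ u') (hzv : z ≠ v'),
            (G.induce {x | x ≠ u' ∧ x ≠ v'}).Reachable
              ⟨r, ⟨hru, hrv⟩⟩ ⟨z, ⟨hzu, hzv⟩⟩ := by
        by_cases hA : ∃ a b, G.dist r a = D ∧ G.dist r b = D ∧ G.Adj a b
        · obtain ⟨a, b, ha, hb, hab⟩ := hA
          have hD1 : 1 ≤ D := by
            by_contra h
            have hD0 : D = 0 := by omega
            have ha0' : G.dist r a = 0 := by omega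
            have hb0' : G.dist r b = 0 := by omega
            have ha0 := dist_eq_zero hconn ha0'
            have hb0 := dist_eq_zero hconn hb0'
            exact hab.ne (ha0 ▸ hb0 ▸ rfl)
          have hra : r ≠ a := fun e => by
            rw [← e] at ha; rw [SimpleGraph.dist_self] at ha; omega
          have hrb : r ≠ b := fun e => by
            rw [← e] at hb; rw [SimpleGraph.dist_self] at hb; omega
          exact ⟨a, b, hab, hra, hrb, reach_avoid_two hconn hD ha hb hra hrb⟩
        · push_neg at hA
          have hindep : ∀ a b, G.dist r a = D → G.dist r b = D → ¬ G.Adj a b := by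
            intro a b ha hb hab
            exact hA a b ha hb hab
          -- D ≥ 2
          have hD2 : 2 ≤ D := by
            by_contra h
            interval_cases D
            · -- D = 0 : everything equals r, card 1
              have : ∀ z : V, r = z := fun z => dist_eq_zero hconn (le_antisymm (hD z) (Nat.zero_le _))
              have : Fintype.card V ≤ 1 :=
                Fintype.card_le_one_iff.mpr fun a b => ((this a).symm.trans (this b))
              omega
            · -- D = 1 : G is a star with ≥ 3 leaves, claw
              have hadj : ∀ z : V, z ≠ r → G.Adj r z := by
                intro z hz
                have h1 : G.dist r z ≤ 1 := hD z
                have h0 : G.dist r z ≠ 0 := fun e => hz (dist_eq_zero hconn e).symm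
                exact adj_of_dist_eq_one hconn (by omega)
              have hdist1 : ∀ z : V, z ≠ r → G.dist r z = 1 := by
                intro z hz
                have h1 : G.dist r z ≤ 1 := hD z
                have h0 : G.dist r z ≠ 0 := fun e => hz (dist_eq_zero hconn e).symm
                omega
              -- find three distinct vertices ≠ r
              have hcard3 : 3 ≤ (Finset.univ.erase r).card := by
                rw [Finset.card_erase_of_mem (Finset.mem_univ r), Finset.card_univ, hcard]
                omega
              obtain ⟨a, ha⟩ := Finset.card_pos.mp (by omega : 0 < (Finset.univ.erase r).card)
              have hcard2 : 0 < ((Finset.univ.erase r).erase a).card := by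
                rw [Finset.card_erase_of_mem ha]; omega
              obtain ⟨b, hb⟩ := Finset.card_pos.mp hcard2
              have hcard1 : 0 < (((Finset.univ.erase r).erase a).erase b).card := by
                rw [Finset.card_erase_of_mem hb, Finset.card_erase_of_mem ha]; omega
              obtain ⟨c, hc⟩ := Finset.card_pos.mp hcard1
              have har : a ≠ r := Finset.ne_of_mem_erase ha
              have hbr : b ≠ r := Finset.ne_of_mem_erase (Finset.mem_of_mem_erase hb)
              have hcr : c ≠ r := Finset.ne_of_mem_erase (Finset.mem_of_mem_erase (Finset.mem_of_mem_erase hc))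
              have hba : b ≠ a := Finset.ne_of_mem_erase hb
              have hcb : c ≠ b := Finset.ne_of_mem_erase hc
              have hca : c ≠ a := Finset.ne_of_mem_erase (Finset.mem_of_mem_erase hc)
              exact hclaw ⟨r, a, b, c, hba.symm, hca.symm, hcb.symm,
                hadj a har, hadj b hbr, hadj c hcr,
                hindep a b (hdist1 a har) (hdist1 b hbr),
                hindep a c (hdist1 a har) (hdist1 c hcr),
                hindep b c (hdist1 b hbr) (hdist1 c hcr)⟩
          -- take u at max distance and its predecessor v
          have hu : G.dist r u₀ = D := hu₀.symm
          have hu' : G.dist r u₀ = (D - 1) + 1 := by omega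
          obtain ⟨v₀, hvu, hv⟩ := exists_pred hconn hu'
          have huv : G.Adj u₀ v₀ := hvu.symm
          have hru : r ≠ u₀ := fun e => by
            rw [← e, SimpleGraph.dist_self] at hu; omega
          have hrv : r ≠ v₀ := fun e => by
            rw [← e, SimpleGraph.dist_self] at hv; omega
          exact ⟨u₀, v₀, huv, hru, hrv,
            reach_avoid_case_b hconn hclaw hD hD2 hindep hu hv huv hru hrv⟩
      obtain ⟨u', v', hadj, hru, hrv, hreach⟩ := hfind
      set s : Set V := {x | x ≠ u' ∧ x ≠ v'} with hsdef
      have hrs : r ∈ s := ⟨hru, hrv⟩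
      have hsconn : (G.induce s).Connected :=
        connected_induce_of_reach hrs (fun z hz => hreach z hz.1 hz.2)
      have hsclaw : ClawFree (G.induce s) := clawFree_induce hclaw s
      have hne' : u' ≠ v' := hadj.ne
      -- cardinality of s
      have hscompl : s = (({u', v'} : Set V))ᶜ := by
        ext x; simp [hsdef, not_or]
      have hscard : Fintype.card ↥s = n - 2 := by
        rw [← Nat.card_eq_fintype_card, Nat.card_coe_set_eq, hscompl,
          Set.compl_eq_univ_diff, Set.ncard_diff (Set.subset_univ _), Set.ncard_univ,
          Set.ncard_pair hne', Nat.card_eq_fintype_card, hcard]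
      -- apply the induction hypothesis
      obtain ⟨M', hM', hM'card⟩ := ih (n - 2) (by omega) (G.induce s) hscard hsconn hsclaw
        (by obtain ⟨m, rfl⟩ := heven; exact ⟨m - 1, by omega⟩)
      -- map the matching back into G
      set f : G.induce s ↪g G := SimpleGraph.Embedding.induce s with hfdef
      have hfinj : Function.Injective ⇑f.toHom := f.injective
      set M : G.Subgraph := M'.map f.toHom with hMdef
      have hMmatch : M.IsMatching := hM'.1.map f.toHom hfinj
      have hMverts : M.verts = s := by
        rw [hMdef, SimpleGraph.Subgraph.map_verts, hM'.2.verts_eq_univ]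
        exact Subtype.coe_image_univ s
      -- combine with the edge u'v'
      have hdisj : Disjoint M.support (G.subgraphOfAdj hadj).support := by
        rw [hMmatch.support_eq_verts,
          (SimpleGraph.Subgraph.IsMatching.subgraphOfAdj hadj).support_eq_verts,
          hMverts]
        rw [Set.disjoint_iff]
        rintro x ⟨⟨hxu, hxv⟩, hx2⟩
        simp only [SimpleGraph.subgraphOfAdj_verts, Set.mem_insert_iff,
          Set.mem_singleton_iff] at hx2
        rcases hx2 with rfl | rfl
        · exact hxu rfl
        · exact hxv rfl
      refine ⟨M ⊔ G.subgraphOfAdj hadj,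
        ⟨hMmatch.sup (SimpleGraph.Subgraph.IsMatching.subgraphOfAdj hadj) hdisj, ?_⟩, ?_⟩
      · intro x
        simp only [SimpleGraph.Subgraph.verts_sup, Set.mem_union, hMverts]
        by_cases hxu : x = u'
        · right; simp [hxu]
        by_cases hxv : x = v'
        · right; simp [hxv]
        · exact Or.inl ⟨hxu, hxv⟩
      · rw [SimpleGraph.Subgraph.edgeSet_sup, Set.ncard_union_eq ?disj (Set.toFinite _)
          (Set.toFinite _)]
        case disj =>
          rw [Set.disjoint_iff]
          rintro e ⟨he1, he2⟩
          rw [SimpleGraph.edgeSet_subgraphOfAdj] at he2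
          rw [Set.mem_singleton_iff] at he2
          subst he2
          have : u' ∈ M.verts := M.edge_vert (SimpleGraph.Subgraph.mem_edgeSet.mp he1)
          rw [hMverts] at this
          exact this.1 rfl
        rw [SimpleGraph.edgeSet_subgraphOfAdj]
        rw [hMdef, edgeSet_map, Set.ncard_image_of_injective _ (Sym2.map.injective hfinj),
          hM'card]
        obtain ⟨m, rfl⟩ := heven
        simp only [Set.ncard_singleton]
        omega

end SumnerAux

theorem stmt13 {V : Type*} [Fintype V] [DecidableEq V] (G : SimpleGraph V)
    [DecidableRel G.Adj] (hconn : G.Connected) (hclaw : ClawFree G)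
    (n : ℕ) (hn : n = Fintype.card V) (hodd : Odd n) (h3 : 3 ≤ n) :
    ∃ M : G.Subgraph, M.IsMatching ∧ M.edgeSet.ncard = (n - 1) / 2 := by
  classical
  open SumnerAux in
  -- choose a vertex of maximal distance from a root and delete it
  have hne : Nonempty V := hconn.nonempty
  obtain ⟨r⟩ := hne
  set D := Finset.univ.sup (fun v => G.dist r v) with hDdef
  have hD : ∀ z, G.dist r z ≤ D := fun z => Finset.le_sup (Finset.mem_univ z)
  obtain ⟨u, -, hu⟩ := Finset.exists_mem_eq_sup Finset.univ ⟨r, Finset.mem_univ r⟩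
    (fun v => G.dist r v)
  have hu : G.dist r u = D := hu.symm
  have hD1 : 1 ≤ D := by
    by_contra h
    have hD0 : D = 0 := by omega
    have : ∀ z : V, r = z := fun z =>
      dist_eq_zero hconn (le_antisymm ((hD z).trans hD0.le) (Nat.zero_le _))
    have : Fintype.card V ≤ 1 :=
      Fintype.card_le_one_iff.mpr fun a b => ((this a).symm.trans (this b))
    omega
  have hru : r ≠ u := fun e => by
    rw [← e, SimpleGraph.dist_self] at hu; omega
  have hreach := reach_avoid_two hconn hD hu hu hru hru
  set s : Set V := {x | x ≠ u ∧ x ≠ u} with hsdef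
  have hrs : r ∈ s := ⟨hru, hru⟩
  have hsconn : (G.induce s).Connected :=
    connected_induce_of_reach hrs (fun z hz => hreach z hz.1 hz.2)
  have hsclaw : ClawFree (G.induce s) := clawFree_induce hclaw s
  have hscompl : s = ({u} : Set V)ᶜ := by
    ext x; simp [hsdef]
  have hscard : Fintype.card ↥s = n - 1 := by
    rw [← Nat.card_eq_fintype_card, Nat.card_coe_set_eq, hscompl,
      Set.compl_eq_univ_diff, Set.ncard_diff (Set.subset_univ _), Set.ncard_univ,
      Set.ncard_singleton, Nat.card_eq_fintype_card, ← hn]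
  obtain ⟨M', hM', hM'card⟩ := even_pm (n - 1) (G.induce s) hscard hsconn hsclaw
    (by obtain ⟨m, rfl⟩ := hodd; exact ⟨m, by omega⟩)
  set f : G.induce s ↪g G := SimpleGraph.Embedding.induce s with hfdef
  have hfinj : Function.Injective ⇑f.toHom := f.injective
  refine ⟨M'.map f.toHom, hM'.1.map f.toHom hfinj, ?_⟩
  rw [edgeSet_map, Set.ncard_image_of_injective _ (Sym2.map.injective hfinj), hM'card]
end
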